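/- arXiv:2207.06292 — 5 statements merged into one kernel-verified Lean document; each statement's English description precedes it below -/
import Mathlib

section
/- (Kerzman–Stein cancellation.) Let Ω ⊆ ℂⁿ (n ≥ 1) be an open convex set and let ρ : ℂⁿ → ℝ be three times continuously differentiable on Ω with all partial derivatives of ρ up to order 3 bounded by M on Ω. Then there is a constant C depending only on n such that for all z, ζ ∈ Ω: |(F(z,ζ) − ρ(ζ)) − (conj(F(ζ,z)) − ρ(z))| ≤ C · M · |ζ−z|³. -/
open Complex MeasureTheory
open scoped BigOperators

noncomputable section

/-- The holomorphic Wirtinger derivative `∂f/∂z_j`. -/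
def wD {n : ℕ} (j : Fin n) (f : EuclideanSpace ℂ (Fin n) → ℂ)
    (z : EuclideanSpace ℂ (Fin n)) : ℂ :=
  (1 / 2 : ℂ) * (fderiv ℝ f z (EuclideanSpace.single j 1)
    - Complex.I * fderiv ℝ f z (EuclideanSpace.single j Complex.I))

/-- The antiholomorphic Wirtinger derivative `∂f/∂z̄_j`. -/
def wDbar {n : ℕ} (j : Fin n) (f : EuclideanSpace ℂ (Fin n) → ℂ)
    (z : EuclideanSpace ℂ (Fin n)) : ℂ :=
  (1 / 2 : ℂ) * (fderiv ℝ f z (EuclideanSpace.single j 1)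
    + Complex.I * fderiv ℝ f z (EuclideanSpace.single j Complex.I))

/-- A real valued function viewed as a complex valued one. -/
def cval {n : ℕ} (ρ : EuclideanSpace ℂ (Fin n) → ℝ) :
    EuclideanSpace ℂ (Fin n) → ℂ := fun z => (ρ z : ℂ)

/-- The Levi polynomial `F(z, ζ)` of `ρ`:
`F(z,ζ) = Σ_j ∂ρ/∂ζ_j(ζ)(ζ_j − z_j) − ½ Σ_{i,j} ∂²ρ/∂ζ_i∂ζ_j(ζ)(z_i − ζ_i)(z_j − ζ_j)`. -/
def leviPoly {n : ℕ} (ρ : EuclideanSpace ℂ (Fin n) → ℝ)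
    (z ζ : EuclideanSpace ℂ (Fin n)) : ℂ :=
  (∑ j, wD j (cval ρ) ζ * (ζ j - z j))
    - (1 / 2 : ℂ) * ∑ i, ∑ j,
        wD i (fun w => wD j (cval ρ) w) ζ * (z i - ζ i) * (z j - ζ j)

/-- The Levi form `L_ρ(ζ; t) = Σ_{i,j} ∂²ρ/∂ζ_i∂ζ̄_j(ζ) t_i conj(t_j)`. -/
def leviForm {n : ℕ} (ρ : EuclideanSpace ℂ (Fin n) → ℝ)
    (ζ t : EuclideanSpace ℂ (Fin n)) : ℂ :=
  ∑ i, ∑ j, wD i (fun w => wDbar j (cval ρ) w) ζ * t i * (starRingEnd ℂ) (t j)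

/-- Every partial derivative of `ρ` (with respect to the underlying real
coordinates of `ℂⁿ ≅ ℝ^{2n}`) of order at most `m` is bounded in absolute
value by `M` on `Ω`. -/
def partialsBoundedBy {n : ℕ} (m : ℕ) (ρ : EuclideanSpace ℂ (Fin n) → ℝ)
    (Ω : Set (EuclideanSpace ℂ (Fin n))) (M : ℝ) : Prop :=
  ∀ k, k ≤ m → ∀ x ∈ Ω, ∀ v : Fin k → EuclideanSpace ℂ (Fin n),
    (∀ i, ∃ j, v i = EuclideanSpace.single j 1 ∨ v i = EuclideanSpace.single j Complex.I) →
    |iteratedFDeriv ℝ k ρ x v| ≤ M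

-- ===== auxiliary =====
namespace KS

section taylor
variable {F : Type*} [NormedAddCommGroup F] [NormedSpace ℝ F]
open Set

lemma mvt_icc {g g' : ℝ → F} {K : ℝ}
    (hg : ∀ s ∈ Icc (0:ℝ) 1, HasDerivAt g (g' s) s)
    (hK : ∀ s ∈ Icc (0:ℝ) 1, ‖g' s‖ ≤ K)
    {a b : ℝ} (ha : a ∈ Icc (0:ℝ) 1) (hb : b ∈ Icc (0:ℝ) 1) :
    ‖g b - g a‖ ≤ K * |b - a| := by
  simpa [Real.norm_eq_abs] using
    Convex.norm_image_sub_le_of_norm_hasDerivWithin_le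
      (fun s hs => (hg s hs).hasDerivWithinAt) hK (convex_Icc 0 1) ha hb

lemma taylor1_icc {g g' g'' : ℝ → F} {K : ℝ}
    (hg : ∀ s ∈ Icc (0:ℝ) 1, HasDerivAt g (g' s) s)
    (hg' : ∀ s ∈ Icc (0:ℝ) 1, HasDerivAt g' (g'' s) s)
    (hK : ∀ s ∈ Icc (0:ℝ) 1, ‖g'' s‖ ≤ K) :
    ‖g 1 - g 0 - g' 0‖ ≤ K := by
  have hK0 : 0 ≤ K := le_trans (norm_nonneg _) (hK 0 (by norm_num))
  have h01 : (0:ℝ) ∈ Icc (0:ℝ) 1 := by norm_num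
  have hG : ∀ s ∈ Icc (0:ℝ) 1,
      HasDerivAt (fun t => g t - t • g' 0) (g' s - g' 0) s := by
    intro s hs
    have h2 : HasDerivAt (fun t : ℝ => t • g' 0) ((1:ℝ) • g' 0) s :=
      (hasDerivAt_id s).smul_const (g' 0)
    simpa using (hg s hs).fun_sub h2
  have hGb : ∀ s ∈ Icc (0:ℝ) 1, ‖g' s - g' 0‖ ≤ K := by
    intro s hs
    calc ‖g' s - g' 0‖ ≤ K * |s - 0| := mvt_icc hg' hK h01 hs
    _ ≤ K * 1 := by
        apply mul_le_mul_of_nonneg_left _ hK0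
        rw [sub_zero, _root_.abs_of_nonneg hs.1]
        exact hs.2
    _ = K := mul_one K
  have := mvt_icc hG hGb h01 (by norm_num : (1:ℝ) ∈ Icc (0:ℝ) 1)
  simpa [sub_right_comm] using this

lemma taylor2_icc {g g' g'' g''' : ℝ → F} {K : ℝ}
    (hg : ∀ s ∈ Icc (0:ℝ) 1, HasDerivAt g (g' s) s)
    (hg' : ∀ s ∈ Icc (0:ℝ) 1, HasDerivAt g' (g'' s) s)
    (hg'' : ∀ s ∈ Icc (0:ℝ) 1, HasDerivAt g'' (g''' s) s)
    (hK : ∀ s ∈ Icc (0:ℝ) 1, ‖g''' s‖ ≤ K) :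
    ‖g 1 - g 0 - g' 0 - (2⁻¹ : ℝ) • g'' 0‖ ≤ K := by
  have hK0 : 0 ≤ K := le_trans (norm_nonneg _) (hK 0 (by norm_num))
  have h01 : (0:ℝ) ∈ Icc (0:ℝ) 1 := by norm_num
  have habs : ∀ s ∈ Icc (0:ℝ) 1, |s| ≤ 1 := by
    intro s hs; rw [_root_.abs_of_nonneg hs.1]; exact hs.2
  set p : ℝ → F := fun t => g' t - g' 0 - t • g'' 0 with hpdef
  have hp : ∀ s ∈ Icc (0:ℝ) 1, HasDerivAt p (g'' s - g'' 0) s := by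
    intro s hs
    have h2 : HasDerivAt (fun t : ℝ => t • g'' 0) ((1:ℝ) • g'' 0) s :=
      (hasDerivAt_id s).smul_const (g'' 0)
    simpa using ((hg' s hs).sub_const (g' 0)).fun_sub h2
  have hpb : ∀ s ∈ Icc (0:ℝ) 1, ‖g'' s - g'' 0‖ ≤ K := by
    intro s hs
    calc ‖g'' s - g'' 0‖ ≤ K * |s - 0| := mvt_icc hg'' hK h01 hs
    _ ≤ K * 1 := mul_le_mul_of_nonneg_left (by simpa using habs s hs) hK0
    _ = K := mul_one K
  have hpsmall : ∀ s ∈ Icc (0:ℝ) 1, ‖p s‖ ≤ K := by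
    intro s hs
    have h0 : p 0 = 0 := by simp [hpdef]
    calc ‖p s‖ = ‖p s - p 0‖ := by rw [h0, sub_zero]
    _ ≤ K * |s - 0| := mvt_icc hp hpb h01 hs
    _ ≤ K * 1 := mul_le_mul_of_nonneg_left (by simpa using habs s hs) hK0
    _ = K := mul_one K
  set G : ℝ → F := fun t => g t - t • g' 0 - ((t*t)/2) • g'' 0 with hGdef
  have hG : ∀ s ∈ Icc (0:ℝ) 1, HasDerivAt G (p s) s := by
    intro s hs
    have h2 : HasDerivAt (fun t : ℝ => t • g' 0) ((1:ℝ) • g' 0) s :=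
      (hasDerivAt_id s).smul_const (g' 0)
    have h3 : HasDerivAt (fun t : ℝ => ((t*t)/2) • g'' 0)
        ((((1:ℝ)*s + s*1)/2) • g'' 0) s :=
      (((hasDerivAt_id s).mul (hasDerivAt_id s)).div_const 2).smul_const (g'' 0)
    have h4 := ((hg s hs).fun_sub h2).fun_sub h3
    have h5 : ((1:ℝ)*s + s*1)/2 = s := by ring
    rw [h5] at h4
    simpa [hpdef] using h4
  have hfin := mvt_icc hG hpsmall h01 (by norm_num : (1:ℝ) ∈ Icc (0:ℝ) 1)
  have hG1 : G 1 - G 0 = g 1 - g 0 - g' 0 - (2⁻¹ : ℝ) • g'' 0 := by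
    simp only [hGdef]
    norm_num
    abel
  rw [hG1] at hfin
  simpa using hfin

end taylor

variable {n : ℕ}

abbrev Esp (n : ℕ) := EuclideanSpace ℂ (Fin n)

abbrev be (j : Fin n) : Esp n := EuclideanSpace.single j (1:ℂ)
abbrev bf (j : Fin n) : Esp n := EuclideanSpace.single j Complex.I

lemma coord_le_norm (v : Esp n) (j : Fin n) : ‖v j‖ ≤ ‖v‖ := by
  rw [EuclideanSpace.norm_eq v]
  have h1 : ‖v j‖ = Real.sqrt (‖v j‖^2) := by
    rw [Real.sqrt_sq (by positivity)]
  rw [h1]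
  apply Real.sqrt_le_sqrt
  exact Finset.single_le_sum (f := fun i => ‖v i‖^2) (fun i _ => by positivity) (Finset.mem_univ j)

lemma re_le_norm (v : Esp n) (j : Fin n) : |(v j).re| ≤ ‖v‖ :=
  le_trans (Complex.abs_re_le_norm _) (coord_le_norm v j)

lemma im_le_norm (v : Esp n) (j : Fin n) : |(v j).im| ≤ ‖v‖ :=
  le_trans (Complex.abs_im_le_norm _) (coord_le_norm v j)

lemma eucl_decomp (v : Esp n) :
    v = ∑ j, ((v j).re • be j + (v j).im • bf j) := by
  ext k
  rw [WithLp.ofLp_sum, Finset.sum_apply]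
  simp only [PiLp.add_apply, PiLp.smul_apply, EuclideanSpace.single_apply, real_smul]
  rw [Finset.sum_eq_single k]
  · simp [Complex.ext_iff]
  · intro b _ hb; simp [if_neg (Ne.symm hb)]
  · intro hk; exact absurd (Finset.mem_univ k) hk

lemma iteratedFDeriv3_apply (ρ : Esp n → ℝ) (x : Esp n) (u v w : Esp n) :
    iteratedFDeriv ℝ 3 ρ x ![u, v, w]
      = fderiv ℝ (fderiv ℝ (fderiv ℝ ρ)) x u v w := by
  rw [iteratedFDeriv_succ_apply_right, iteratedFDeriv_two_apply]
  rfl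

/-- expand one slot of a CLM over the real basis -/
lemma clm_norm_le {F : Type*} [NormedAddCommGroup F] [NormedSpace ℝ F]
    (L : Esp n →L[ℝ] F) {P : ℝ}
    (hP : ∀ j : Fin n, ‖L (be j)‖ ≤ P ∧ ‖L (bf j)‖ ≤ P) (v : Esp n) :
    ‖L v‖ ≤ (2*n) * P * ‖v‖ := by
  have hv := eucl_decomp v
  calc ‖L v‖ = ‖∑ j, ((v j).re • L (be j) + (v j).im • L (bf j))‖ := by
        conv_lhs => rw [hv]
        rw [map_sum]
        simp [map_add]
  _ ≤ ∑ j : Fin n, ‖(v j).re • L (be j) + (v j).im • L (bf j)‖ := norm_sum_le _ _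
  _ ≤ ∑ j : Fin n, (‖v‖ * P + ‖v‖ * P) := by
      apply Finset.sum_le_sum
      intro j _
      refine le_trans (norm_add_le _ _) (add_le_add ?_ ?_)
      · rw [norm_smul, Real.norm_eq_abs]
        exact mul_le_mul (re_le_norm v j) (hP j).1 (norm_nonneg _) (norm_nonneg _)
      · rw [norm_smul, Real.norm_eq_abs]
        exact mul_le_mul (im_le_norm v j) (hP j).2 (norm_nonneg _) (norm_nonneg _)
  _ = (2*n) * P * ‖v‖ := by
      rw [Finset.sum_const, Finset.card_univ, Fintype.card_fin]
      push_cast; ring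

/-- the Wirtinger reconstruction identity for a real-linear real-valued map -/
lemma wirt_reconstruct (L : Esp n →L[ℝ] ℝ) (v : Esp n) :
    ((L v : ℝ) : ℂ)
      = (∑ j, (1/2:ℂ)*((L (be j) : ℝ) - Complex.I*(L (bf j) : ℝ)) * (v j))
        + (starRingEnd ℂ) (∑ j, (1/2:ℂ)*((L (be j) : ℝ) - Complex.I*(L (bf j) : ℝ)) * (v j)) := by
  rw [map_sum, ← Finset.sum_add_distrib]
  have hv : L v = ∑ j, ((v j).re * L (be j) + (v j).im * L (bf j)) := by
    conv_lhs => rw [eucl_decomp v]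
    rw [map_sum]
    simp [smul_eq_mul]
  rw [hv]
  push_cast
  apply Finset.sum_congr rfl
  intro j _
  have hcj : (v j) = ((v j).re : ℂ) + ((v j).im : ℂ) * Complex.I := (Complex.re_add_im _).symm
  rw [hcj]
  simp only [map_mul, map_add, map_sub, map_div₀, map_one, map_ofNat, conj_ofReal, conj_I]
  ring_nf
  simp [Complex.ext_iff]

variable (ρ : Esp n → ℝ)

abbrev F1 := fderiv ℝ ρ
abbrev F2 := fderiv ℝ (F1 ρ)
abbrev F3 := fderiv ℝ (F2 ρ)

variable {ρ} {Ω : Set (Esp n)}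

lemma hasF1 (hΩ : IsOpen Ω) (hρ : ContDiffOn ℝ 3 ρ Ω) :
    ∀ x ∈ Ω, HasFDerivAt ρ (F1 ρ x) x := by
  intro x hx
  exact ((hρ.differentiableOn (by norm_num)).differentiableAt (hΩ.mem_nhds hx)).hasFDerivAt

lemma contDiffF1 (hΩ : IsOpen Ω) (hρ : ContDiffOn ℝ 3 ρ Ω) :
    ContDiffOn ℝ 2 (F1 ρ) Ω := by
  have h3 : ContDiffOn ℝ ((2:ℕ) + 1) ρ Ω := by exact_mod_cast hρ
  exact ((contDiffOn_succ_iff_fderiv_of_isOpen hΩ).mp h3).2.2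

lemma hasF2 (hΩ : IsOpen Ω) (hρ : ContDiffOn ℝ 3 ρ Ω) :
    ∀ x ∈ Ω, HasFDerivAt (F1 ρ) (F2 ρ x) x := by
  intro x hx
  exact (((contDiffF1 hΩ hρ).differentiableOn (by norm_num)).differentiableAt
    (hΩ.mem_nhds hx)).hasFDerivAt

lemma contDiffF2 (hΩ : IsOpen Ω) (hρ : ContDiffOn ℝ 3 ρ Ω) :
    ContDiffOn ℝ 1 (F2 ρ) Ω := by
  have h2 : ContDiffOn ℝ ((1:ℕ) + 1) (F1 ρ) Ω := by exact_mod_cast contDiffF1 hΩ hρ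
  exact ((contDiffOn_succ_iff_fderiv_of_isOpen hΩ).mp h2).2.2

lemma hasF3 (hΩ : IsOpen Ω) (hρ : ContDiffOn ℝ 3 ρ Ω) :
    ∀ x ∈ Ω, HasFDerivAt (F2 ρ) (F3 ρ x) x := by
  intro x hx
  exact (((contDiffF2 hΩ hρ).differentiableOn (by norm_num)).differentiableAt
    (hΩ.mem_nhds hx)).hasFDerivAt

lemma F2symm (hΩ : IsOpen Ω) (hρ : ContDiffOn ℝ 3 ρ Ω) :
    ∀ x ∈ Ω, ∀ v w, F2 ρ x v w = F2 ρ x w v := by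
  intro x hx v w
  apply second_derivative_symmetric_of_eventually (f := ρ) (f' := F1 ρ)
  · filter_upwards [hΩ.mem_nhds hx] with y hy using hasF1 hΩ hρ y hy
  · exact hasF2 hΩ hρ x hx


section wforms
variable (ρ)

/-- explicit first Wirtinger coefficient -/
def cE (j : Fin n) (w : Esp n) : ℂ :=
  (1/2:ℂ)*(((F1 ρ w (be j) : ℝ) : ℂ) - Complex.I*((F1 ρ w (bf j) : ℝ) : ℂ))

/-- explicit second Wirtinger coefficient -/
def dE (i j : Fin n) (x : Esp n) : ℂ :=
  (1/2:ℂ)*((1/2:ℂ)*(((F2 ρ x (be i) (be j) : ℝ):ℂ) - Complex.I*((F2 ρ x (be i) (bf j) : ℝ):ℂ))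
    - Complex.I*((1/2:ℂ)*(((F2 ρ x (bf i) (be j) : ℝ):ℂ)
        - Complex.I*((F2 ρ x (bf i) (bf j) : ℝ):ℂ))))

/-- explicit mixed Wirtinger coefficient -/
def gE (i j : Fin n) (x : Esp n) : ℂ :=
  (1/4:ℂ)*(((F2 ρ x (be i) (be j) : ℝ):ℂ) + ((F2 ρ x (bf i) (bf j) : ℝ):ℂ)
    + Complex.I*(((F2 ρ x (bf i) (be j) : ℝ):ℂ) - ((F2 ρ x (be i) (bf j) : ℝ):ℂ)))

variable {ρ}

lemma fderiv_cval (hΩ : IsOpen Ω) (hρ : ContDiffOn ℝ 3 ρ Ω) {x : Esp n} (hx : x ∈ Ω) :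
    fderiv ℝ (cval ρ) x = Complex.ofRealCLM.comp (F1 ρ x) := by
  have h := (Complex.ofRealCLM.hasFDerivAt.comp x (hasF1 hΩ hρ x hx))
  exact h.fderiv

lemma wD_cval (hΩ : IsOpen Ω) (hρ : ContDiffOn ℝ 3 ρ Ω) {x : Esp n} (hx : x ∈ Ω) (j : Fin n) :
    wD j (cval ρ) x = cE ρ j x := by
  unfold wD cE
  rw [fderiv_cval hΩ hρ hx]
  rfl

lemma hasFDerivAt_cE (hΩ : IsOpen Ω) (hρ : ContDiffOn ℝ 3 ρ Ω) {x : Esp n} (hx : x ∈ Ω)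
    (j : Fin n) :
    HasFDerivAt (cE ρ j)
      ((1/2:ℂ) • ((Complex.ofRealCLM.comp ((ContinuousLinearMap.apply ℝ ℝ (be j)).comp (F2 ρ x)))
        - Complex.I • (Complex.ofRealCLM.comp
            ((ContinuousLinearMap.apply ℝ ℝ (bf j)).comp (F2 ρ x))))) x := by
  have hA : HasFDerivAt (fun w => ((F1 ρ w (be j) : ℝ) : ℂ))
      (Complex.ofRealCLM.comp ((ContinuousLinearMap.apply ℝ ℝ (be j)).comp (F2 ρ x))) x :=
    Complex.ofRealCLM.hasFDerivAt.comp x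
      ((ContinuousLinearMap.apply ℝ ℝ (be j)).hasFDerivAt.comp x (hasF2 hΩ hρ x hx))
  have hB : HasFDerivAt (fun w => ((F1 ρ w (bf j) : ℝ) : ℂ))
      (Complex.ofRealCLM.comp ((ContinuousLinearMap.apply ℝ ℝ (bf j)).comp (F2 ρ x))) x :=
    Complex.ofRealCLM.hasFDerivAt.comp x
      ((ContinuousLinearMap.apply ℝ ℝ (bf j)).hasFDerivAt.comp x (hasF2 hΩ hρ x hx))
  exact ((hA.sub (hB.const_mul Complex.I)).const_mul (1/2:ℂ))

lemma wD_wD (hΩ : IsOpen Ω) (hρ : ContDiffOn ℝ 3 ρ Ω) {x : Esp n} (hx : x ∈ Ω) (i j : Fin n) :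
    wD i (fun w => wD j (cval ρ) w) x = dE ρ i j x := by
  have hEq : (fun w => wD j (cval ρ) w) =ᶠ[nhds x] (cE ρ j) := by
    filter_upwards [hΩ.mem_nhds hx] with w hw using wD_cval hΩ hρ hw j
  have hD := (hasFDerivAt_cE hΩ hρ hx j).congr_of_eventuallyEq hEq
  rw [show wD i (fun w => wD j (cval ρ) w) x
      = (1/2:ℂ)*((fderiv ℝ (fun w => wD j (cval ρ) w) x) (be i)
        - Complex.I * (fderiv ℝ (fun w => wD j (cval ρ) w) x) (bf i)) from rfl, hD.fderiv]
  unfold dE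
  simp only [ContinuousLinearMap.smul_apply, ContinuousLinearMap.sub_apply,
    ContinuousLinearMap.comp_apply, ContinuousLinearMap.apply_apply,
    Complex.ofRealCLM_apply, smul_eq_mul]

end wforms

section bound
variable {M : ℝ}

def Bas (u : Esp n) : Prop := ∃ j, u = be j ∨ u = bf j

lemma basBe (j : Fin n) : Bas (be j) := ⟨j, Or.inl rfl⟩
lemma basBf (j : Fin n) : Bas (bf j) := ⟨j, Or.inr rfl⟩

lemma f3_basis_bound (hbd : partialsBoundedBy 3 ρ Ω M) {x : Esp n} (hx : x ∈ Ω)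
    {u v w : Esp n} (hu : Bas u) (hv : Bas v) (hw : Bas w) :
    |F3 ρ x u v w| ≤ M := by
  have h := hbd 3 le_rfl x hx ![u, v, w] ?_
  · rwa [iteratedFDeriv3_apply] at h
  · intro i
    fin_cases i
    · simpa [Bas] using hu
    · simpa [Bas] using hv
    · simpa [Bas] using hw

lemma f3_norm_bound (hbd : partialsBoundedBy 3 ρ Ω M) {x : Esp n} (hx : x ∈ Ω)
    (va vb vc : Esp n) :
    |F3 ρ x va vb vc| ≤ (2*n)^3 * M * (‖va‖ * ‖vb‖ * ‖vc‖) := by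
  have step1 : ∀ u v, Bas u → Bas v → ∀ c', ‖F3 ρ x u v c'‖ ≤ (2*n)*M*‖c'‖ := by
    intro u v hu hv c'
    have hP : ∀ j : Fin n, ‖(F3 ρ x u v) (be j)‖ ≤ M ∧ ‖(F3 ρ x u v) (bf j)‖ ≤ M :=
      fun j => ⟨by simpa [Real.norm_eq_abs] using f3_basis_bound hbd hx hu hv (basBe j),
        by simpa [Real.norm_eq_abs] using f3_basis_bound hbd hx hu hv (basBf j)⟩
    exact clm_norm_le (F3 ρ x u v) hP c'
  have step2 : ∀ u, Bas u → ‖F3 ρ x u vb vc‖ ≤ (2*n)*((2*n)*M*‖vc‖)*‖vb‖ := by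
    intro u hu
    have hP : ∀ j : Fin n, ‖((F3 ρ x u).flip vc) (be j)‖ ≤ (2*n)*M*‖vc‖
        ∧ ‖((F3 ρ x u).flip vc) (bf j)‖ ≤ (2*n)*M*‖vc‖ :=
      fun j => ⟨by simpa [ContinuousLinearMap.flip_apply] using step1 u (be j) hu (basBe j) vc,
        by simpa [ContinuousLinearMap.flip_apply] using step1 u (bf j) hu (basBf j) vc⟩
    have h := clm_norm_le ((F3 ρ x u).flip vc) hP vb
    simpa [ContinuousLinearMap.flip_apply] using h
  have hP : ∀ j : Fin n,
      ‖(((ContinuousLinearMap.apply ℝ ℝ vc).comp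
        (((ContinuousLinearMap.apply ℝ (Esp n →L[ℝ] ℝ) vb)).comp (F3 ρ x)))) (be j)‖
          ≤ (2*n)*((2*n)*M*‖vc‖)*‖vb‖
      ∧ ‖(((ContinuousLinearMap.apply ℝ ℝ vc).comp
        (((ContinuousLinearMap.apply ℝ (Esp n →L[ℝ] ℝ) vb)).comp (F3 ρ x)))) (bf j)‖
          ≤ (2*n)*((2*n)*M*‖vc‖)*‖vb‖ :=
    fun j => ⟨by simpa [ContinuousLinearMap.comp_apply, ContinuousLinearMap.apply_apply]
        using step2 (be j) (basBe j),
      by simpa [ContinuousLinearMap.comp_apply, ContinuousLinearMap.apply_apply]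
        using step2 (bf j) (basBf j)⟩
  have step3 := clm_norm_le _ hP va
  have heq : (2*(n:ℝ))*((2*n)*((2*n)*M*‖vc‖)*‖vb‖)*‖va‖
      = (2*n)^3 * M * (‖va‖ * ‖vb‖ * ‖vc‖) := by ring
  rw [← heq]
  simpa [ContinuousLinearMap.comp_apply, ContinuousLinearMap.apply_apply,
    Real.norm_eq_abs] using step3

end bound

lemma half_bound {x y B : ℝ} (hx : |x| ≤ B) (hy : |y| ≤ B) :
    ‖(1/2:ℂ)*((x:ℂ) - Complex.I*(y:ℂ))‖ ≤ B := by
  have h1 : ‖((x:ℂ) - Complex.I*(y:ℂ))‖ ≤ |x| + |y| := by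
    refine le_trans (norm_sub_le _ _) ?_
    simp [Complex.norm_real]
  calc ‖(1/2:ℂ)*((x:ℂ) - Complex.I*(y:ℂ))‖
      = (1/2) * ‖((x:ℂ) - Complex.I*(y:ℂ))‖ := by
        rw [norm_mul]; norm_num
  _ ≤ (1/2) * (|x| + |y|) := by linarith [h1]
  _ ≤ B := by linarith

lemma quarter_bound {A B C D Bd : ℝ} (hA : |A| ≤ Bd) (hB : |B| ≤ Bd)
    (hC : |C| ≤ Bd) (hD : |D| ≤ Bd) :
    ‖(1/2:ℂ)*((1/2:ℂ)*((A:ℂ) - Complex.I*(B:ℂ))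
      - Complex.I*((1/2:ℂ)*((C:ℂ) - Complex.I*(D:ℂ))))‖ ≤ Bd := by
  have h1 := half_bound hA hB
  have h2 := half_bound hC hD
  have h3 : ‖((1/2:ℂ)*((A:ℂ) - Complex.I*(B:ℂ))
      - Complex.I*((1/2:ℂ)*((C:ℂ) - Complex.I*(D:ℂ))))‖
      ≤ Bd + Bd := by
    refine le_trans (norm_sub_le _ _) ?_
    have : ‖Complex.I*((1/2:ℂ)*((C:ℂ) - Complex.I*(D:ℂ)))‖
        = ‖(1/2:ℂ)*((C:ℂ) - Complex.I*(D:ℂ))‖ := by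
      rw [norm_mul, Complex.norm_I, one_mul]
    rw [this]
    exact add_le_add h1 h2
  calc ‖(1/2:ℂ)*((1/2:ℂ)*((A:ℂ) - Complex.I*(B:ℂ))
      - Complex.I*((1/2:ℂ)*((C:ℂ) - Complex.I*(D:ℂ))))‖
      = (1/2)*‖((1/2:ℂ)*((A:ℂ) - Complex.I*(B:ℂ))
        - Complex.I*((1/2:ℂ)*((C:ℂ) - Complex.I*(D:ℂ))))‖ := by
        rw [norm_mul]; norm_num
  _ ≤ (1/2)*(Bd + Bd) := by linarith [h3]
  _ = Bd := by ring

end KS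


set_option maxHeartbeats 1000000 in
open KS in
/-- Kerzman–Stein cancellation:
`|(F(z,ζ) − ρ(ζ)) − (conj(F(ζ,z)) − ρ(z))| ≤ C·M·|ζ−z|³`. -/
theorem kerzman_stein_cancellation (n : ℕ) (hn : 1 ≤ n) :
    ∃ C : ℝ, 0 < C ∧
      ∀ (Ω : Set (EuclideanSpace ℂ (Fin n))) (ρ : EuclideanSpace ℂ (Fin n) → ℝ) (M : ℝ),
        IsOpen Ω → Convex ℝ Ω → ContDiffOn ℝ 3 ρ Ω → partialsBoundedBy 3 ρ Ω M →
        ∀ z ∈ Ω, ∀ ζ ∈ Ω,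
          ‖(leviPoly ρ z ζ - (ρ ζ : ℂ))
              - ((starRingEnd ℂ) (leviPoly ρ ζ z) - (ρ z : ℂ))‖
            ≤ C * M * ‖ζ - z‖ ^ 3 := by
  classical
  have hn' : (0:ℝ) < n := by exact_mod_cast hn
  refine ⟨(2*(n:ℝ))^3 * (1 + n + n^2), by positivity, ?_⟩
  intro Ω ρ M hΩ hconv hρ hbd z hz ζ hζ
  set P : ℝ := (2*(n:ℝ))^3 with hPdef
  have hM0 : 0 ≤ M := by
    have h0 := hbd 0 (by norm_num) z hz (fun i => i.elim0) (fun i => i.elim0)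
    rw [iteratedFDeriv_zero_apply] at h0
    exact le_trans (abs_nonneg _) h0
  obtain ⟨h, hh⟩ : ∃ v : Esp n, v = z - ζ := ⟨_, rfl⟩
  set R : ℝ := ‖h‖ with hRdef
  have hR0 : 0 ≤ R := norm_nonneg _
  have hRζz : ‖ζ - z‖ = R := by rw [hRdef, hh, norm_sub_rev]
  have hcoord : ∀ j : Fin n, h j = z j - ζ j := by
    intro j; rw [hh]; rfl
  have hjR : ∀ j : Fin n, ‖h j‖ ≤ R := fun j => coord_le_norm h j
  -- the curve
  set γ : ℝ → Esp n := fun s => ζ + s • h with hγdef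
  have hγ0 : γ 0 = ζ := by simp [hγdef]
  have hγ1 : γ 1 = z := by simp [hγdef, hh]
  have hγΩ : ∀ s ∈ Set.Icc (0:ℝ) 1, γ s ∈ Ω := by
    intro s hs
    have e : γ s = (1-s) • ζ + s • z := by
      simp only [hγdef, hh]
      module
    rw [e]
    exact hconv hζ hz (by linarith [hs.2]) hs.1 (by ring)
  have hγd : ∀ s : ℝ, HasDerivAt γ h s := by
    intro s
    simpa [hγdef] using ((hasDerivAt_id s).smul_const h).const_add ζ
  -- derivative primitives along the curve
  have hD1 : ∀ s ∈ Set.Icc (0:ℝ) 1, HasDerivAt (fun t => ρ (γ t)) (F1 ρ (γ s) h) s :=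
    fun s hs => (hasF1 hΩ hρ _ (hγΩ s hs)).comp_hasDerivAt s (hγd s)
  have hD2 : ∀ s ∈ Set.Icc (0:ℝ) 1, ∀ v,
      HasDerivAt (fun t => F1 ρ (γ t) v) (F2 ρ (γ s) h v) s := by
    intro s hs v
    have hc := ((ContinuousLinearMap.apply ℝ ℝ v).hasFDerivAt.comp (γ s)
      (hasF2 hΩ hρ _ (hγΩ s hs))).comp_hasDerivAt s (hγd s)
    simpa [Function.comp_def, ContinuousLinearMap.comp_apply,
      ContinuousLinearMap.apply_apply] using hc
  have hD3 : ∀ s ∈ Set.Icc (0:ℝ) 1, ∀ u v,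
      HasDerivAt (fun t => F2 ρ (γ t) u v) (F3 ρ (γ s) h u v) s := by
    intro s hs u v
    have hc := ((ContinuousLinearMap.apply ℝ ℝ v).hasFDerivAt.comp (γ s)
      (((ContinuousLinearMap.apply ℝ (Esp n →L[ℝ] ℝ) u).hasFDerivAt.comp (γ s) (f := F2 ρ)
        (hasF3 hΩ hρ _ (hγΩ s hs))))).comp_hasDerivAt s (hγd s)
    simpa [Function.comp_def, ContinuousLinearMap.comp_apply,
      ContinuousLinearMap.apply_apply] using hc
  have hD2c : ∀ s ∈ Set.Icc (0:ℝ) 1, ∀ v,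
      HasDerivAt (fun t => ((F1 ρ (γ t) v : ℝ) : ℂ)) (((F2 ρ (γ s) h v : ℝ) : ℂ)) s := by
    intro s hs v
    simpa [Function.comp_def] using Complex.ofRealCLM.hasFDerivAt.comp_hasDerivAt s (hD2 s hs v)
  have hD3c : ∀ s ∈ Set.Icc (0:ℝ) 1, ∀ u v,
      HasDerivAt (fun t => ((F2 ρ (γ t) u v : ℝ) : ℂ)) (((F3 ρ (γ s) h u v : ℝ) : ℂ)) s := by
    intro s hs u v
    simpa [Function.comp_def] using Complex.ofRealCLM.hasFDerivAt.comp_hasDerivAt s (hD3 s hs u v)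
  -- third-derivative bound
  have hF3b : ∀ s ∈ Set.Icc (0:ℝ) 1, ∀ a b c : Esp n,
      |F3 ρ (γ s) a b c| ≤ P * M * (‖a‖ * ‖b‖ * ‖c‖) :=
    fun s hs a b c => f3_norm_bound hbd (hγΩ s hs) a b c
  have hbe1 : ∀ j : Fin n, ‖(be j : Esp n)‖ = 1 := by
    intro j; rw [EuclideanSpace.norm_single]; norm_num
  have hbf1 : ∀ j : Fin n, ‖(bf j : Esp n)‖ = 1 := by
    intro j; rw [EuclideanSpace.norm_single]; simp
  have hRRR : ‖h‖ * ‖h‖ * ‖h‖ = R^3 := by rw [← hRdef]; ring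
  -- Taylor order 2 for ρ along the curve
  have hT1 : |ρ z - ρ ζ - F1 ρ ζ h - 2⁻¹ * (F2 ρ ζ h h)| ≤ P * M * R^3 := by
    have hK : ∀ s ∈ Set.Icc (0:ℝ) 1, ‖F3 ρ (γ s) h h h‖ ≤ P * M * R^3 := by
      intro s hs
      have := hF3b s hs h h h
      rw [hRRR] at this
      simpa [Real.norm_eq_abs] using this
    have := taylor2_icc hD1 (fun s hs => hD2 s hs h) (fun s hs => hD3 s hs h h) hK
    rw [hγ0, hγ1] at this
    simpa [Real.norm_eq_abs, smul_eq_mul] using this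
  -- the main complex quantities
  obtain ⟨Uζ, hUζ⟩ : ∃ c : ℂ, c = ∑ j, cE ρ j ζ * h j := ⟨_, rfl⟩
  obtain ⟨Uz, hUz⟩ : ∃ c : ℂ, c = ∑ j, cE ρ j z * h j := ⟨_, rfl⟩
  obtain ⟨Qζ, hQζ⟩ : ∃ c : ℂ, c = ∑ i, ∑ j, dE ρ i j ζ * h i * h j := ⟨_, rfl⟩
  obtain ⟨Qz, hQz⟩ : ∃ c : ℂ, c = ∑ i, ∑ j, dE ρ i j z * h i * h j := ⟨_, rfl⟩
  obtain ⟨Lζ, hLζ⟩ : ∃ c : ℂ, c = ∑ i, ∑ j, gE ρ i j ζ * (starRingEnd ℂ) (h i) * h j := ⟨_, rfl⟩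
  obtain ⟨Ψζ, hΨζ⟩ : ∃ c : ℂ, c = ∑ j, (1/2:ℂ)*(((F2 ρ ζ h (be j) : ℝ):ℂ)
    - Complex.I*((F2 ρ ζ h (bf j) : ℝ):ℂ)) * h j := ⟨_, rfl⟩
  -- Taylor order 1 for U along the curve
  have hT2 : ‖Uz - Uζ - Ψζ‖ ≤ n * (P * M * R^3) := by
    have hg : ∀ s ∈ Set.Icc (0:ℝ) 1, HasDerivAt (fun t => ∑ j, cE ρ j (γ t) * h j)
        (∑ j, (1/2:ℂ)*(((F2 ρ (γ s) h (be j) : ℝ):ℂ)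
          - Complex.I*((F2 ρ (γ s) h (bf j) : ℝ):ℂ)) * h j) s := by
      intro s hs
      refine HasDerivAt.fun_sum (fun j _ => ?_)
      have hc := (((hD2c s hs (be j)).sub ((hD2c s hs (bf j)).const_mul
        Complex.I)).const_mul (1/2:ℂ)).mul_const (h j)
      simpa [cE] using hc
    have hg' : ∀ s ∈ Set.Icc (0:ℝ) 1, HasDerivAt
        (fun s' => ∑ j, (1/2:ℂ)*(((F2 ρ (γ s') h (be j) : ℝ):ℂ)
          - Complex.I*((F2 ρ (γ s') h (bf j) : ℝ):ℂ)) * h j)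
        (∑ j, (1/2:ℂ)*(((F3 ρ (γ s) h h (be j) : ℝ):ℂ)
          - Complex.I*((F3 ρ (γ s) h h (bf j) : ℝ):ℂ)) * h j) s := by
      intro s hs
      refine HasDerivAt.fun_sum (fun j _ => ?_)
      exact (((hD3c s hs h (be j)).sub ((hD3c s hs h (bf j)).const_mul
        Complex.I)).const_mul (1/2:ℂ)).mul_const (h j)
    have hK : ∀ s ∈ Set.Icc (0:ℝ) 1,
        ‖∑ j, (1/2:ℂ)*(((F3 ρ (γ s) h h (be j) : ℝ):ℂ)
          - Complex.I*((F3 ρ (γ s) h h (bf j) : ℝ):ℂ)) * h j‖ ≤ n * (P * M * R^3) := by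
      intro s hs
      refine le_trans (norm_sum_le _ _) ?_
      have hterm : ∀ j : Fin n, ‖(1/2:ℂ)*(((F3 ρ (γ s) h h (be j) : ℝ):ℂ)
          - Complex.I*((F3 ρ (γ s) h h (bf j) : ℝ):ℂ)) * h j‖ ≤ P * M * R^3 := by
        intro j
        rw [norm_mul]
        have h1 : |F3 ρ (γ s) h h (be j)| ≤ P * M * (R * R) := by
          have := hF3b s hs h h (be j)
          rwa [hbe1 j, ← hRdef, mul_one] at this
        have h2 : |F3 ρ (γ s) h h (bf j)| ≤ P * M * (R * R) := by
          have := hF3b s hs h h (bf j)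
          rwa [hbf1 j, ← hRdef, mul_one] at this
        have h3 := half_bound h1 h2
        calc ‖(1/2:ℂ)*(((F3 ρ (γ s) h h (be j) : ℝ):ℂ)
            - Complex.I*((F3 ρ (γ s) h h (bf j) : ℝ):ℂ))‖ * ‖h j‖
            ≤ (P * M * (R * R)) * R := by
              refine mul_le_mul h3 (hjR j) (norm_nonneg _) ?_
              positivity
        _ = P * M * R^3 := by ring
      refine le_trans (Finset.sum_le_sum (fun j _ => hterm j)) ?_
      rw [Finset.sum_const, Finset.card_univ, Fintype.card_fin, nsmul_eq_mul]
    have := taylor1_icc hg hg' hK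
    rw [hγ0, hγ1] at this
    simpa [hUz, hUζ, hΨζ] using this
  -- Lipschitz estimate for Q along the curve
  have hT3 : ‖Qz - Qζ‖ ≤ (n:ℝ)^2 * (P * M * R^3) := by
    have hg : ∀ s ∈ Set.Icc (0:ℝ) 1, HasDerivAt
        (fun t => ∑ i, ∑ j, dE ρ i j (γ t) * h i * h j)
        (∑ i, ∑ j, ((1/2:ℂ)*((1/2:ℂ)*(((F3 ρ (γ s) h (be i) (be j) : ℝ):ℂ)
            - Complex.I*((F3 ρ (γ s) h (be i) (bf j) : ℝ):ℂ))
          - Complex.I*((1/2:ℂ)*(((F3 ρ (γ s) h (bf i) (be j) : ℝ):ℂ)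
            - Complex.I*((F3 ρ (γ s) h (bf i) (bf j) : ℝ):ℂ))))) * h i * h j) s := by
      intro s hs
      refine HasDerivAt.fun_sum (fun i _ => HasDerivAt.fun_sum (fun j _ => ?_))
      have hA := hD3c s hs (be i) (be j)
      have hB := hD3c s hs (be i) (bf j)
      have hC := hD3c s hs (bf i) (be j)
      have hDd := hD3c s hs (bf i) (bf j)
      have hc := (((((hA.sub (hB.const_mul Complex.I)).const_mul (1/2:ℂ)).sub
        (((hC.sub (hDd.const_mul Complex.I)).const_mul (1/2:ℂ)).const_mul
          Complex.I)).const_mul (1/2:ℂ)).mul_const (h i)).mul_const (h j)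
      simpa [dE] using hc
    have hK : ∀ s ∈ Set.Icc (0:ℝ) 1,
        ‖∑ i, ∑ j, ((1/2:ℂ)*((1/2:ℂ)*(((F3 ρ (γ s) h (be i) (be j) : ℝ):ℂ)
            - Complex.I*((F3 ρ (γ s) h (be i) (bf j) : ℝ):ℂ))
          - Complex.I*((1/2:ℂ)*(((F3 ρ (γ s) h (bf i) (be j) : ℝ):ℂ)
            - Complex.I*((F3 ρ (γ s) h (bf i) (bf j) : ℝ):ℂ))))) * h i * h j‖
          ≤ (n:ℝ)^2 * (P * M * R^3) := by
      intro s hs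
      have hterm : ∀ i j : Fin n, ‖((1/2:ℂ)*((1/2:ℂ)*(((F3 ρ (γ s) h (be i) (be j) : ℝ):ℂ)
            - Complex.I*((F3 ρ (γ s) h (be i) (bf j) : ℝ):ℂ))
          - Complex.I*((1/2:ℂ)*(((F3 ρ (γ s) h (bf i) (be j) : ℝ):ℂ)
            - Complex.I*((F3 ρ (γ s) h (bf i) (bf j) : ℝ):ℂ))))) * h i * h j‖
          ≤ P * M * R^3 := by
        intro i j
        have hE : ∀ u v : Esp n, Bas u → Bas v → |F3 ρ (γ s) h u v| ≤ P * M * R := by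
          intro u v hu hv
          have := hF3b s hs h u v
          rcases hu with ⟨ju, hu⟩; rcases hv with ⟨jv, hv⟩
          have h1 : ‖u‖ = 1 := by
            rcases hu with hu | hu
            · rw [hu]; exact hbe1 ju
            · rw [hu]; exact hbf1 ju
          have h2 : ‖v‖ = 1 := by
            rcases hv with hv | hv
            · rw [hv]; exact hbe1 jv
            · rw [hv]; exact hbf1 jv
          rwa [h1, h2, ← hRdef, mul_one, mul_one] at this
        have hq := quarter_bound (hE _ _ (basBe i) (basBe j)) (hE _ _ (basBe i) (basBf j))
          (hE _ _ (basBf i) (basBe j)) (hE _ _ (basBf i) (basBf j))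
        rw [norm_mul, norm_mul]
        calc ‖(1/2:ℂ)*((1/2:ℂ)*(((F3 ρ (γ s) h (be i) (be j) : ℝ):ℂ)
            - Complex.I*((F3 ρ (γ s) h (be i) (bf j) : ℝ):ℂ))
          - Complex.I*((1/2:ℂ)*(((F3 ρ (γ s) h (bf i) (be j) : ℝ):ℂ)
            - Complex.I*((F3 ρ (γ s) h (bf i) (bf j) : ℝ):ℂ))))‖ * ‖h i‖ * ‖h j‖
            ≤ (P * M * R) * R * R := by
              refine mul_le_mul (mul_le_mul hq (hjR i) (norm_nonneg _) (by positivity))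
                (hjR j) (norm_nonneg _) (by positivity)
        _ = P * M * R^3 := by ring
      refine le_trans (norm_sum_le _ _) ?_
      refine le_trans (Finset.sum_le_sum (fun i _ => le_trans (norm_sum_le _ _)
        (Finset.sum_le_sum (fun j _ => hterm i j)))) ?_
      simp only [Finset.sum_const, Finset.card_univ, Fintype.card_fin, nsmul_eq_mul]
      rw [← mul_assoc]
      ring_nf
      exact le_refl _
    have := mvt_icc hg hK (by norm_num : (0:ℝ) ∈ Set.Icc (0:ℝ) 1)
      (by norm_num : (1:ℝ) ∈ Set.Icc (0:ℝ) 1)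
    rw [hγ0, hγ1] at this
    simpa [hQz, hQζ] using this
  -- pointwise Wirtinger identities at ζ
  have hUζ' : Uζ = ∑ j, (1/2:ℂ)*(((F1 ρ ζ (be j) : ℝ):ℂ)
      - Complex.I*((F1 ρ ζ (bf j) : ℝ):ℂ)) * h j := by
    rw [hUζ]; simp only [cE]
  have IA : ((F1 ρ ζ h : ℝ):ℂ) = Uζ + (starRingEnd ℂ) Uζ := by
    rw [hUζ']; exact wirt_reconstruct (F1 ρ ζ) h
  have ID : ((F2 ρ ζ h h : ℝ):ℂ) = Ψζ + (starRingEnd ℂ) Ψζ := by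
    rw [hΨζ]; exact wirt_reconstruct (F2 ρ ζ h) h
  -- expansion of the first slot
  have hexp : ∀ v : Esp n, F2 ρ ζ h v
      = ∑ i, ((h i).re * F2 ρ ζ (be i) v + (h i).im * F2 ρ ζ (bf i) v) := by
    intro v
    conv_lhs => rw [eucl_decomp h]
    rw [map_sum, ContinuousLinearMap.sum_apply]
    refine Finset.sum_congr rfl (fun i _ => ?_)
    rw [map_add, (F2 ρ ζ).map_smul, (F2 ρ ζ).map_smul]
    simp [smul_eq_mul]
  have hQ' : Qζ = ∑ j, ∑ i, dE ρ i j ζ * h i * h j := by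
    rw [hQζ]; exact Finset.sum_comm
  have hL' : Lζ = ∑ j, ∑ i, gE ρ i j ζ * (starRingEnd ℂ) (h i) * h j := by
    rw [hLζ]; exact Finset.sum_comm
  have IB : Ψζ = Qζ + Lζ := by
    rw [hΨζ, hQ', hL', ← Finset.sum_add_distrib]
    refine Finset.sum_congr rfl (fun j _ => ?_)
    rw [← Finset.sum_add_distrib]
    rw [hexp (be j), hexp (bf j)]
    push_cast
    have hlin : ∀ (S T : Fin n → ℂ) (c : ℂ),
        (1/2:ℂ)*((∑ i, S i) - Complex.I*(∑ i, T i))*c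
          = ∑ i, (1/2:ℂ)*(S i - Complex.I*T i)*c := by
      intro S T c
      rw [Finset.mul_sum, ← Finset.sum_sub_distrib, Finset.mul_sum, Finset.sum_mul]
    rw [hlin (fun i => ((h i).re : ℂ) * ↑(F2 ρ ζ (be i) (be j))
        + ((h i).im : ℂ) * ↑(F2 ρ ζ (bf i) (be j)))
      (fun i => ((h i).re : ℂ) * ↑(F2 ρ ζ (be i) (bf j))
        + ((h i).im : ℂ) * ↑(F2 ρ ζ (bf i) (bf j))) (h j)]
    refine Finset.sum_congr rfl (fun i _ => ?_)
    simp only [dE, gE]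
    rw [show (h i) = ((h i).re : ℂ) + ((h i).im : ℂ) * Complex.I from (Complex.re_add_im _).symm]
    simp only [map_mul, map_add, map_sub, map_div₀, map_one, map_ofNat,
      Complex.conj_ofReal, Complex.conj_I]
    simp [Complex.ext_iff]
    constructor <;> ring
  have hsym := F2symm hΩ hρ ζ hζ
  have hgconj : ∀ i j : Fin n, (starRingEnd ℂ) (gE ρ j i ζ) = gE ρ i j ζ := by
    intro i j
    simp only [gE, map_mul, map_add, map_sub, map_div₀, map_one, map_ofNat,
      Complex.conj_ofReal, Complex.conj_I]
    rw [hsym (be j) (be i), hsym (bf j) (bf i), hsym (bf j) (be i), hsym (be j) (bf i)]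
    ring
  have IC : (starRingEnd ℂ) Lζ = Lζ := by
    calc (starRingEnd ℂ) Lζ
        = ∑ i, ∑ j, (starRingEnd ℂ) (gE ρ i j ζ) * (h i) * (starRingEnd ℂ) (h j) := by
          rw [hLζ, map_sum]
          refine Finset.sum_congr rfl (fun i _ => ?_)
          rw [map_sum]
          refine Finset.sum_congr rfl (fun j _ => ?_)
          simp [map_mul]
    _ = ∑ j, ∑ i, (starRingEnd ℂ) (gE ρ i j ζ) * (h i) * (starRingEnd ℂ) (h j) :=
          Finset.sum_comm
    _ = ∑ i, ∑ j, gE ρ i j ζ * (starRingEnd ℂ) (h i) * h j := by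
          refine Finset.sum_congr rfl (fun i _ => Finset.sum_congr rfl (fun j _ => ?_))
          rw [hgconj i j]; ring
    _ = Lζ := hLζ.symm
  -- leviPoly explicit forms
  have e1 : ∀ j, wD j (cval ρ) ζ = cE ρ j ζ := fun j => wD_cval hΩ hρ hζ j
  have e1z : ∀ j, wD j (cval ρ) z = cE ρ j z := fun j => wD_cval hΩ hρ hz j
  have e2 : ∀ i j, wD i (fun w => wD j (cval ρ) w) ζ = dE ρ i j ζ :=
    fun i j => wD_wD hΩ hρ hζ i j
  have e2z : ∀ i j, wD i (fun w => wD j (cval ρ) w) z = dE ρ i j z :=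
    fun i j => wD_wD hΩ hρ hz i j
  have hlp1 : leviPoly ρ z ζ = -Uζ - (1/2:ℂ) * Qζ := by
    have s1 : ∑ j, wD j (cval ρ) ζ * (ζ j - z j) = -Uζ := by
      rw [hUζ, ← Finset.sum_neg_distrib]
      refine Finset.sum_congr rfl (fun j _ => ?_)
      rw [e1 j, show (ζ j - z j : ℂ) = -(h j) by rw [hcoord j]; ring]
      ring
    have s2 : ∑ i, ∑ j, wD i (fun w => wD j (cval ρ) w) ζ * (z i - ζ i) * (z j - ζ j) = Qζ := by
      rw [hQζ]
      refine Finset.sum_congr rfl (fun i _ => Finset.sum_congr rfl (fun j _ => ?_))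
      rw [e2 i j, ← hcoord i, ← hcoord j]
    simp only [leviPoly]
    rw [s1, s2]
  have hlp2 : leviPoly ρ ζ z = Uz - (1/2:ℂ) * Qz := by
    have s1 : ∑ j, wD j (cval ρ) z * (z j - ζ j) = Uz := by
      rw [hUz]
      refine Finset.sum_congr rfl (fun j _ => ?_)
      rw [e1z j, ← hcoord j]
    have s2 : ∑ i, ∑ j, wD i (fun w => wD j (cval ρ) w) z * (ζ i - z i) * (ζ j - z j) = Qz := by
      rw [hQz]
      refine Finset.sum_congr rfl (fun i _ => Finset.sum_congr rfl (fun j _ => ?_))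
      rw [e2z i j, show (ζ i - z i : ℂ) = -(h i) by rw [hcoord i]; ring,
        show (ζ j - z j : ℂ) = -(h j) by rw [hcoord j]; ring]
      ring
    simp only [leviPoly]
    rw [s1, s2]
  -- assembly
  have hcast : ((ρ z - ρ ζ - F1 ρ ζ h - 2⁻¹ * (F2 ρ ζ h h) : ℝ) : ℂ)
      = (ρ z : ℂ) - (ρ ζ : ℂ) - (Uζ + (starRingEnd ℂ) Uζ)
        - 2⁻¹ * (Ψζ + (starRingEnd ℂ) Ψζ) := by
    rw [← IA, ← ID]
    push_cast
    ring
  have IBc : (starRingEnd ℂ) Ψζ = (starRingEnd ℂ) Qζ + (starRingEnd ℂ) Lζ := by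
    rw [IB, map_add]
  have hXeq : (leviPoly ρ z ζ - ((ρ ζ : ℝ) : ℂ))
        - ((starRingEnd ℂ) (leviPoly ρ ζ z) - ((ρ z : ℝ) : ℂ))
      = ((ρ z - ρ ζ - F1 ρ ζ h - 2⁻¹ * (F2 ρ ζ h h) : ℝ):ℂ)
        - (starRingEnd ℂ) (Uz - Uζ - Ψζ) + (1/2:ℂ) * (starRingEnd ℂ) (Qz - Qζ) := by
    rw [hlp1, hlp2]
    simp only [map_sub, map_add, map_mul, map_div₀, map_one, map_ofNat]
    linear_combination (-1:ℂ)*hcast + (1/2:ℂ)*IB - (1/2:ℂ)*IBc - (1/2:ℂ)*IC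
  rw [hXeq]
  have hb1 : ‖((ρ z - ρ ζ - F1 ρ ζ h - 2⁻¹ * (F2 ρ ζ h h) : ℝ):ℂ)‖ ≤ P * M * R^3 := by
    rw [Complex.norm_real, Real.norm_eq_abs]
    exact hT1
  have hb2 : ‖(starRingEnd ℂ) (Uz - Uζ - Ψζ)‖ ≤ n * (P * M * R^3) := by
    rw [RCLike.norm_conj]
    exact hT2
  have hb3 : ‖(1/2:ℂ) * (starRingEnd ℂ) (Qz - Qζ)‖ ≤ (1/2) * ((n:ℝ)^2 * (P * M * R^3)) := by
    rw [norm_mul, RCLike.norm_conj]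
    refine mul_le_mul ?_ hT3 (norm_nonneg _) (by norm_num)
    simp
  have hP0 : 0 ≤ P := by rw [hPdef]; positivity
  have hPMR : 0 ≤ P * M * R^3 := by
    refine mul_nonneg (mul_nonneg hP0 hM0) (by positivity)
  have htri : ‖((ρ z - ρ ζ - F1 ρ ζ h - 2⁻¹ * (F2 ρ ζ h h) : ℝ):ℂ)
        - (starRingEnd ℂ) (Uz - Uζ - Ψζ) + (1/2:ℂ) * (starRingEnd ℂ) (Qz - Qζ)‖
      ≤ ‖((ρ z - ρ ζ - F1 ρ ζ h - 2⁻¹ * (F2 ρ ζ h h) : ℝ):ℂ)‖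
        + ‖(starRingEnd ℂ) (Uz - Uζ - Ψζ)‖ + ‖(1/2:ℂ) * (starRingEnd ℂ) (Qz - Qζ)‖ := by
    refine le_trans (norm_add_le _ _) ?_
    exact add_le_add_left (norm_sub_le _ _) _
  refine le_trans htri ?_
  rw [hRζz]
  have hexpand : P * (1 + (n:ℝ) + (n:ℝ)^2) * M * R^3
      = P * M * R^3 + (n:ℝ) * (P * M * R^3) + (n:ℝ)^2 * (P * M * R^3) := by ring
  rw [hexpand]
  have hn2 : 0 ≤ (n:ℝ)^2 * (P * M * R^3) := by positivity
  linarith [hb1, hb2, hb3]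
end
end

section
/- Let Ω ⊆ ℂⁿ (n ≥ 1) be an open convex set and let ρ : ℂⁿ → ℝ be three times continuously differentiable on Ω with all partial derivatives of ρ up to order 3 bounded by M on Ω. Assume there is c > 0 such that the Levi form satisfies L_ρ(ζ; t) := Σ_{i,j=1}^n (∂²ρ/∂ζ_i∂ζ̄_j)(ζ) t_i conj(t_j) ≥ c|t|² for every ζ ∈ Ω and every t ∈ ℂⁿ. Then there exists ε₀ > 0, depending only on n, M and c, such that for all z, ζ ∈ Ω with |z−ζ| < ε₀: Re F(z,ζ) ≥ (ρ(ζ) − ρ(z))/2 + (c/4)|z−ζ|². -/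
open Complex MeasureTheory
open scoped BigOperators

noncomputable section

/-!
Expand `ρ` to second order about `ζ` along the segment `[ζ, z]`, with Lagrange remainder
`R = d³ρ(w)(v, v, v)`, `v = z - ζ`. In Wirtinger form the real differentials are
`dρ(ζ) v = 2 Re Σ ρ_j v_j` and `d²ρ(ζ)(v, v) = 2 Re Σ ρ_{ij} v_i v_j + 2 L_ρ(ζ; v)`, whence
`Re F(z, ζ) = (ρ(ζ) - ρ(z)) / 2 + L_ρ(ζ; v) / 2 + R / 12`.
Expanding `R` in the real basis `e_j, i e_j` of `ℂⁿ` gives `|R| ≤ (2n)³ M |v|³`, and the Levi form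
bound `c |v|² / 2` absorbs this down to `c |v|² / 4` once `(2n)³ |M| |v| ≤ 3c`.
-/

lemma MultilinearMap.abs_apply_const_le {ι E : Type*} [Fintype ι] [AddCommGroup E] [Module ℝ E]
    {k : ℕ} (b : Module.Basis ι ℝ E) (m : MultilinearMap ℝ (fun _ : Fin k => E) ℝ) {M C : ℝ}
    (hm : ∀ r : Fin k → ι, |m (b ∘ r)| ≤ M) {v : E} (hv : ∀ i, |b.repr v i| ≤ C) :
    |m (fun _ => v)| ≤ Fintype.card ι ^ k * C ^ k * M := by
  have hexp : m (fun _ => v) = ∑ r : Fin k → ι, (∏ s, b.repr v (r s)) • m (b ∘ r) := by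
    conv_lhs => rw [← b.sum_repr v]
    rw [m.map_sum]
    exact Finset.sum_congr rfl fun r _ => m.map_smul_univ _ _
  have hterm : ∀ r : Fin k → ι, |(∏ s, b.repr v (r s)) • m (b ∘ r)| ≤ C ^ k * M := by
    intro r
    have hprod : |∏ s, b.repr v (r s)| ≤ C ^ k := by
      rw [Finset.abs_prod]
      simpa using Finset.prod_le_prod (s := Finset.univ) (fun s _ => abs_nonneg _)
        (fun s _ => hv (r s))
    rw [smul_eq_mul, abs_mul]
    exact mul_le_mul hprod (hm r) (abs_nonneg _) ((abs_nonneg _).trans hprod)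
  calc |m (fun _ => v)| ≤ ∑ r : Fin k → ι, |(∏ s, b.repr v (r s)) • m (b ∘ r)| := by
        rw [hexp]; exact Finset.abs_sum_le_sum_abs _ _
    _ ≤ ∑ _r : Fin k → ι, C ^ k * M := Finset.sum_le_sum fun r _ => hterm r
    _ = Fintype.card ι ^ k * C ^ k * M := by simp [mul_assoc]

section RealCoordinates

variable {n : ℕ}

def realBasis (n : ℕ) : Module.Basis (Fin 2 × Fin n) ℝ (EuclideanSpace ℂ (Fin n)) :=
  basisOneI.smulTower (EuclideanSpace.basisFun (Fin n) ℂ).toBasis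

@[simp] lemma realBasis_zero (j : Fin n) : realBasis n (0, j) = EuclideanSpace.single j 1 := by
  simp [realBasis, Module.Basis.smulTower_apply]

@[simp] lemma realBasis_one (j : Fin n) : realBasis n (1, j) = EuclideanSpace.single j I := by
  ext k
  simp [realBasis, Module.Basis.smulTower_apply]

@[simp] lemma realBasis_repr_zero (v : EuclideanSpace ℂ (Fin n)) (j : Fin n) :
    (realBasis n).repr v (0, j) = (v j).re := by
  simp [realBasis]

@[simp] lemma realBasis_repr_one (v : EuclideanSpace ℂ (Fin n)) (j : Fin n) :
    (realBasis n).repr v (1, j) = (v j).im := by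
  simp [realBasis]

lemma abs_realBasis_repr_le (v : EuclideanSpace ℂ (Fin n)) (p : Fin 2 × Fin n) :
    |(realBasis n).repr v p| ≤ ‖v‖ := by
  obtain ⟨k, j⟩ := p
  refine le_trans ?_ (PiLp.norm_apply_le v j)
  fin_cases k
  · simpa using abs_re_le_norm (v j)
  · simpa using abs_im_le_norm (v j)

lemma exists_realBasis_eq_single (p : Fin 2 × Fin n) : ∃ j,
    realBasis n p = EuclideanSpace.single j 1 ∨ realBasis n p = EuclideanSpace.single j I := by
  obtain ⟨k, j⟩ := p
  refine ⟨j, ?_⟩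
  fin_cases k <;> simp

lemma ContinuousLinearMap.apply_eq_sum_re_smul_add_im_smul {F : Type*} [AddCommGroup F]
    [Module ℝ F] [TopologicalSpace F] (L : EuclideanSpace ℂ (Fin n) →L[ℝ] F)
    (v : EuclideanSpace ℂ (Fin n)) :
    L v = ∑ j, ((v j).re • L (EuclideanSpace.single j 1)
      + (v j).im • L (EuclideanSpace.single j I)) := by
  conv_lhs => rw [← (realBasis n).sum_repr v]
  rw [map_sum, Fintype.sum_prod_type, Fin.sum_univ_two, ← Finset.sum_add_distrib]
  simp only [map_smul, realBasis_zero, realBasis_one, realBasis_repr_zero, realBasis_repr_one]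

lemma abs_iteratedFDeriv_apply_const_le {m k : ℕ} {ρ : EuclideanSpace ℂ (Fin n) → ℝ}
    {Ω : Set (EuclideanSpace ℂ (Fin n))} {M : ℝ} {x : EuclideanSpace ℂ (Fin n)}
    (hB : partialsBoundedBy m ρ Ω M) (hk : k ≤ m) (hx : x ∈ Ω) (v : EuclideanSpace ℂ (Fin n)) :
    |iteratedFDeriv ℝ k ρ x (fun _ => v)| ≤ (2 * n) ^ k * ‖v‖ ^ k * M := by
  have := (iteratedFDeriv ℝ k ρ x).toMultilinearMap.abs_apply_const_le (realBasis n)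
    (fun r => hB k hk x hx _ fun s => exists_realBasis_eq_single (r s)) (abs_realBasis_repr_le v)
  simpa using this

end RealCoordinates

section WirtingerExpansion

variable {n : ℕ}

lemma ContinuousLinearMap.apply_eq_two_mul_re_sum (L : EuclideanSpace ℂ (Fin n) →L[ℝ] ℝ)
    (v : EuclideanSpace ℂ (Fin n)) :
    L v = 2 * (∑ j, (1 / 2 : ℂ) * (L (EuclideanSpace.single j 1)
      - I * L (EuclideanSpace.single j I)) * v j).re := by
  rw [L.apply_eq_sum_re_smul_add_im_smul v, re_sum, Finset.mul_sum]
  refine Finset.sum_congr rfl fun j _ => ?_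
  simp only [smul_eq_mul, mul_re, mul_im, sub_re, sub_im, div_ofNat_re, div_ofNat_im, one_re,
    one_im, ofReal_re, ofReal_im, I_re, I_im]
  ring

lemma ContinuousLinearMap.apply_apply_eq_two_mul_re_sum
    (T : EuclideanSpace ℂ (Fin n) →L[ℝ] EuclideanSpace ℂ (Fin n) →L[ℝ] ℝ)
    (v : EuclideanSpace ℂ (Fin n)) :
    T v v = 2 * (∑ i, ∑ j, (1 / 4 : ℂ) *
        (T (EuclideanSpace.single i 1) (EuclideanSpace.single j 1)
          - I * T (EuclideanSpace.single i 1) (EuclideanSpace.single j I)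
          - I * T (EuclideanSpace.single i I) (EuclideanSpace.single j 1)
          - T (EuclideanSpace.single i I) (EuclideanSpace.single j I)) * v i * v j).re
      + 2 * (∑ i, ∑ j, (1 / 4 : ℂ) *
        (T (EuclideanSpace.single i 1) (EuclideanSpace.single j 1)
          + I * T (EuclideanSpace.single i 1) (EuclideanSpace.single j I)
          - I * T (EuclideanSpace.single i I) (EuclideanSpace.single j 1)
          + T (EuclideanSpace.single i I) (EuclideanSpace.single j I))
          * v i * starRingEnd ℂ (v j)).re := by
  rw [T.apply_eq_sum_re_smul_add_im_smul v, sum_apply]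
  simp only [add_apply, smul_apply, ContinuousLinearMap.apply_eq_sum_re_smul_add_im_smul _ v]
  simp only [re_sum, Finset.mul_sum, ← Finset.sum_add_distrib]
  refine Finset.sum_congr rfl fun i _ => Finset.sum_congr rfl fun j _ => ?_
  simp only [smul_eq_mul, mul_re, mul_im, add_re, add_im, sub_re, sub_im, div_ofNat_re,
    div_ofNat_im, one_re, one_im, ofReal_re, ofReal_im, I_re, I_im, conj_re, conj_im]
  ring

end WirtingerExpansion

section Taylor

variable {E F : Type*} [NormedAddCommGroup E] [NormedSpace ℝ E] [NormedAddCommGroup F]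
  [NormedSpace ℝ F]

lemma hasDerivAt_iteratedFDeriv_lineMap {f : E → F} {k : ℕ} {x v : E} {s : ℝ}
    (hf : ContDiffAt ℝ (k + 1) f (x + s • v)) :
    HasDerivAt (fun t : ℝ => iteratedFDeriv ℝ k f (x + t • v) (fun _ => v))
      (iteratedFDeriv ℝ (k + 1) f (x + s • v) (fun _ => v)) s := by
  have hline : HasDerivAt (fun t : ℝ => x + t • v) v s := by
    simpa using ((hasDerivAt_id s).smul_const v).const_add x
  have hdiff : DifferentiableAt ℝ (iteratedFDeriv ℝ k f) (x + s • v) :=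
    (hf.iteratedFDeriv_right (m := 1) (by rw [add_comm])).differentiableAt one_ne_zero
  rw [iteratedFDeriv_succ_apply_left]
  exact (ContinuousMultilinearMap.apply ℝ (fun _ : Fin k => E) F
    (fun _ => v)).hasFDerivAt.comp_hasDerivAt s (hdiff.hasFDerivAt.comp_hasDerivAt s hline)

lemma iteratedDerivWithin_comp_lineMap {Ω : Set E} {f : E → F} {m k : ℕ} {x v : E}
    (hΩ : IsOpen Ω) (hf : ContDiffOn ℝ m f Ω) (hseg : ∀ t ∈ Set.Icc (0 : ℝ) 1, x + t • v ∈ Ω)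
    (hk : k ≤ m) {t : ℝ} (ht : t ∈ Set.Icc (0 : ℝ) 1) :
    iteratedDerivWithin k (fun t : ℝ => f (x + t • v)) (Set.Icc 0 1) t
      = iteratedFDeriv ℝ k f (x + t • v) (fun _ => v) := by
  induction k generalizing t with
  | zero => simp
  | succ k ih =>
    have hderiv := hasDerivAt_iteratedFDeriv_lineMap (k := k)
      ((hf.contDiffAt (hΩ.mem_nhds (hseg t ht))).of_le (by exact_mod_cast hk))
    rw [iteratedDerivWithin_succ,
      derivWithin_congr (fun s hs => ih (by omega) hs) (ih (by omega) ht)]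
    exact hderiv.hasDerivWithinAt.derivWithin (uniqueDiffOn_Icc_zero_one t ht)

theorem Convex.exists_taylor_mean_remainder_lagrange {Ω : Set E} {f : E → ℝ} {k : ℕ}
    (hΩ : IsOpen Ω) (hconv : Convex ℝ Ω) (hf : ContDiffOn ℝ (k + 1) f Ω) {x y : E}
    (hx : x ∈ Ω) (hy : y ∈ Ω) :
    ∃ w ∈ Ω, f y = ∑ j ∈ Finset.range (k + 1),
        iteratedFDeriv ℝ j f x (fun _ => y - x) / j.factorial
      + iteratedFDeriv ℝ (k + 1) f w (fun _ => y - x) / (k + 1).factorial := by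
  have hseg : ∀ t ∈ Set.Icc (0 : ℝ) 1, x + t • (y - x) ∈ Ω := fun t ht =>
    hconv.add_smul_sub_mem hx hy ht
  have hf' : ContDiffOn ℝ (k + 1 : ℕ) f Ω := by exact_mod_cast hf
  set g : ℝ → ℝ := fun t => f (x + t • (y - x))
  have hderivs : ∀ j ≤ k + 1, ∀ t ∈ Set.Icc (0 : ℝ) 1, iteratedDerivWithin j g (Set.Icc 0 1) t
      = iteratedFDeriv ℝ j f (x + t • (y - x)) (fun _ => y - x) :=
    fun j hj t ht => iteratedDerivWithin_comp_lineMap hΩ hf' hseg hj ht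
  have hg : ContDiffOn ℝ k g (Set.Icc 0 1) :=
    (hf.of_le (by norm_cast; omega)).comp (by fun_prop) hseg
  have hg' : DifferentiableOn ℝ (iteratedDerivWithin k g (Set.Icc 0 1)) (Set.Ioo 0 1) := by
    intro t ht
    have ht' := Set.Ioo_subset_Icc_self ht
    exact (hasDerivAt_iteratedFDeriv_lineMap (hf.contDiffAt (hΩ.mem_nhds (hseg t ht'))))
      |>.differentiableAt.differentiableWithinAt.congr
        (fun s hs => hderivs k (by omega) s (Set.Ioo_subset_Icc_self hs))
        (hderivs k (by omega) t ht')
  obtain ⟨t, ht, htaylor⟩ := taylor_mean_remainder_lagrange (n := k) (x₀ := 0) (x := 1)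
    zero_ne_one (by simpa using hg) (by simpa using hg')
  rw [Set.uIoo_of_le zero_le_one] at ht
  have ht' := Set.Ioo_subset_Icc_self ht
  rw [Set.uIcc_of_le zero_le_one, taylor_within_apply, hderivs (k + 1) le_rfl t ht',
    Finset.sum_congr rfl fun j hj => by
      rw [hderivs j (by grind) 0 ⟨le_rfl, zero_le_one⟩]] at htaylor
  refine ⟨x + t • (y - x), hseg t ht', ?_⟩
  simp only [one_smul, add_sub_cancel, sub_zero, one_pow, mul_one, zero_smul, add_zero,
    smul_eq_mul, g] at htaylor
  rw [← htaylor]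
  simp only [div_eq_inv_mul]
  ring

theorem Convex.exists_taylor_two_mean_remainder_lagrange {Ω : Set E} {f : E → ℝ}
    (hΩ : IsOpen Ω) (hconv : Convex ℝ Ω) (hf : ContDiffOn ℝ 3 f Ω) {x y : E} (hx : x ∈ Ω)
    (hy : y ∈ Ω) :
    ∃ w ∈ Ω, f y = f x + fderiv ℝ f x (y - x) + fderiv ℝ (fderiv ℝ f) x (y - x) (y - x) / 2
      + iteratedFDeriv ℝ 3 f w (fun _ => y - x) / 6 := by
  obtain ⟨w, hw, htaylor⟩ := hconv.exists_taylor_mean_remainder_lagrange (k := 2) hΩ hf hx hy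
  refine ⟨w, hw, ?_⟩
  simpa [Finset.sum_range_succ, iteratedFDeriv_two_apply, Nat.factorial] using htaylor

end Taylor

section Wirtinger

variable {n : ℕ} {ρ : EuclideanSpace ℂ (Fin n) → ℝ} {x : EuclideanSpace ℂ (Fin n)}

lemma wD_of_hasFDerivAt {f : EuclideanSpace ℂ (Fin n) → ℂ}
    {f' : EuclideanSpace ℂ (Fin n) →L[ℝ] ℂ} (hf : HasFDerivAt f f' x) (j : Fin n) :
    wD j f x = (1 / 2 : ℂ) * (f' (EuclideanSpace.single j 1)
      - I * f' (EuclideanSpace.single j I)) := by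
  rw [wD, hf.fderiv]

lemma wDbar_of_hasFDerivAt {f : EuclideanSpace ℂ (Fin n) → ℂ}
    {f' : EuclideanSpace ℂ (Fin n) →L[ℝ] ℂ} (hf : HasFDerivAt f f' x) (j : Fin n) :
    wDbar j f x = (1 / 2 : ℂ) * (f' (EuclideanSpace.single j 1)
      + I * f' (EuclideanSpace.single j I)) := by
  rw [wDbar, hf.fderiv]

lemma Filter.EventuallyEq.wD_eq {f g : EuclideanSpace ℂ (Fin n) → ℂ} (h : f =ᶠ[nhds x] g)
    (j : Fin n) : wD j f x = wD j g x := by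
  rw [wD, wD, h.fderiv_eq]

lemma hasFDerivAt_cval {ρ' : EuclideanSpace ℂ (Fin n) →L[ℝ] ℝ} (h : HasFDerivAt ρ ρ' x) :
    HasFDerivAt (cval ρ) (ofRealCLM.comp ρ') x :=
  ofRealCLM.hasFDerivAt.comp x h

lemma wD_cval (h : DifferentiableAt ℝ ρ x) (j : Fin n) :
    wD j (cval ρ) x = (1 / 2 : ℂ) * (fderiv ℝ ρ x (EuclideanSpace.single j 1)
      - I * fderiv ℝ ρ x (EuclideanSpace.single j I)) :=
  wD_of_hasFDerivAt (hasFDerivAt_cval h.hasFDerivAt) j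

lemma wDbar_cval (h : DifferentiableAt ℝ ρ x) (j : Fin n) :
    wDbar j (cval ρ) x = (1 / 2 : ℂ) * (fderiv ℝ ρ x (EuclideanSpace.single j 1)
      + I * fderiv ℝ ρ x (EuclideanSpace.single j I)) :=
  wDbar_of_hasFDerivAt (hasFDerivAt_cval h.hasFDerivAt) j

lemma hasFDerivAt_cval_fderiv_apply (h : DifferentiableAt ℝ (fderiv ℝ ρ) x)
    (u : EuclideanSpace ℂ (Fin n)) :
    HasFDerivAt (cval fun w => fderiv ℝ ρ w u)
      (ofRealCLM.comp ((ContinuousLinearMap.apply ℝ ℝ u).comp (fderiv ℝ (fderiv ℝ ρ) x))) x :=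
  hasFDerivAt_cval ((ContinuousLinearMap.apply ℝ ℝ u).hasFDerivAt.comp x h.hasFDerivAt)

lemma wD_wD_cval (hρ : ContDiffAt ℝ 2 ρ x) (i j : Fin n) :
    wD i (fun w => wD j (cval ρ) w) x = (1 / 4 : ℂ) *
      (fderiv ℝ (fderiv ℝ ρ) x (EuclideanSpace.single i 1) (EuclideanSpace.single j 1)
        - I * fderiv ℝ (fderiv ℝ ρ) x (EuclideanSpace.single i 1) (EuclideanSpace.single j I)
        - I * fderiv ℝ (fderiv ℝ ρ) x (EuclideanSpace.single i I) (EuclideanSpace.single j 1)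
        - fderiv ℝ (fderiv ℝ ρ) x (EuclideanSpace.single i I) (EuclideanSpace.single j I)) := by
  have h2 : DifferentiableAt ℝ (fderiv ℝ ρ) x :=
    (hρ.fderiv_right (m := 1) le_rfl).differentiableAt one_ne_zero
  have hnear : (fun w => wD j (cval ρ) w) =ᶠ[nhds x] fun w => (1 / 2 : ℂ) *
      (cval (fun w => fderiv ℝ ρ w (EuclideanSpace.single j 1)) w
        - I * cval (fun w => fderiv ℝ ρ w (EuclideanSpace.single j I)) w) := by
    filter_upwards [hρ.eventually (by simp)] with w hw
    exact wD_cval (hw.differentiableAt (by norm_num)) j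
  have hd := ((hasFDerivAt_cval_fderiv_apply h2 (EuclideanSpace.single j 1)).sub
    ((hasFDerivAt_cval_fderiv_apply h2 (EuclideanSpace.single j I)).const_mul I)).const_mul
    (1 / 2 : ℂ)
  simp only [Pi.sub_apply] at hd
  rw [hnear.wD_eq, wD_of_hasFDerivAt hd]
  simp only [smul_apply, sub_apply, ContinuousLinearMap.comp_apply,
    ContinuousLinearMap.apply_apply, ofRealCLM_apply, smul_eq_mul]
  ring_nf
  rw [I_sq]
  ring

lemma wD_wDbar_cval (hρ : ContDiffAt ℝ 2 ρ x) (i j : Fin n) :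
    wD i (fun w => wDbar j (cval ρ) w) x = (1 / 4 : ℂ) *
      (fderiv ℝ (fderiv ℝ ρ) x (EuclideanSpace.single i 1) (EuclideanSpace.single j 1)
        + I * fderiv ℝ (fderiv ℝ ρ) x (EuclideanSpace.single i 1) (EuclideanSpace.single j I)
        - I * fderiv ℝ (fderiv ℝ ρ) x (EuclideanSpace.single i I) (EuclideanSpace.single j 1)
        + fderiv ℝ (fderiv ℝ ρ) x (EuclideanSpace.single i I) (EuclideanSpace.single j I)) := by
  have h2 : DifferentiableAt ℝ (fderiv ℝ ρ) x :=
    (hρ.fderiv_right (m := 1) le_rfl).differentiableAt one_ne_zero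
  have hnear : (fun w => wDbar j (cval ρ) w) =ᶠ[nhds x] fun w => (1 / 2 : ℂ) *
      (cval (fun w => fderiv ℝ ρ w (EuclideanSpace.single j 1)) w
        + I * cval (fun w => fderiv ℝ ρ w (EuclideanSpace.single j I)) w) := by
    filter_upwards [hρ.eventually (by simp)] with w hw
    exact wDbar_cval (hw.differentiableAt (by norm_num)) j
  have hd := ((hasFDerivAt_cval_fderiv_apply h2 (EuclideanSpace.single j 1)).add
    ((hasFDerivAt_cval_fderiv_apply h2 (EuclideanSpace.single j I)).const_mul I)).const_mul
    (1 / 2 : ℂ)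
  simp only [Pi.add_apply] at hd
  rw [hnear.wD_eq, wD_of_hasFDerivAt hd]
  simp only [smul_apply, add_apply, ContinuousLinearMap.comp_apply,
    ContinuousLinearMap.apply_apply, ofRealCLM_apply, smul_eq_mul]
  ring_nf
  rw [I_sq]
  ring

end Wirtinger

section LeviPolynomial

variable {n : ℕ} {ρ : EuclideanSpace ℂ (Fin n) → ℝ} {x : EuclideanSpace ℂ (Fin n)}

lemma fderiv_apply_eq_two_mul_re_sum_wD (h : DifferentiableAt ℝ ρ x)
    (v : EuclideanSpace ℂ (Fin n)) :
    fderiv ℝ ρ x v = 2 * (∑ j, wD j (cval ρ) x * v j).re := by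
  simp only [wD_cval h]
  exact (fderiv ℝ ρ x).apply_eq_two_mul_re_sum v

lemma fderiv_fderiv_apply_eq_two_mul_re_sum_add_leviForm (hρ : ContDiffAt ℝ 2 ρ x)
    (v : EuclideanSpace ℂ (Fin n)) :
    fderiv ℝ (fderiv ℝ ρ) x v v
      = 2 * (∑ i, ∑ j, wD i (fun w => wD j (cval ρ) w) x * v i * v j).re
        + 2 * (leviForm ρ x v).re := by
  simp only [leviForm, wD_wD_cval hρ, wD_wDbar_cval hρ]
  exact (fderiv ℝ (fderiv ℝ ρ) x).apply_apply_eq_two_mul_re_sum v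

lemma re_leviPoly (z ζ : EuclideanSpace ℂ (Fin n)) :
    (leviPoly ρ z ζ).re = -(∑ j, wD j (cval ρ) ζ * (z - ζ) j).re
      - (∑ i, ∑ j, wD i (fun w => wD j (cval ρ) w) ζ * (z - ζ) i * (z - ζ) j).re / 2 := by
  have hneg : ∑ j, wD j (cval ρ) ζ * (ζ j - z j) = -∑ j, wD j (cval ρ) ζ * (z - ζ) j := by
    rw [← Finset.sum_neg_distrib]
    exact Finset.sum_congr rfl fun j _ => by rw [PiLp.sub_apply]; ring
  simp only [leviPoly, hneg, PiLp.sub_apply, sub_re, neg_re, mul_re, div_ofNat_re, div_ofNat_im,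
    one_re, one_im]
  ring

end LeviPolynomial

theorem re_leviPoly_lower_bound_general (n : ℕ) (M c : ℝ) (hc : 0 < c) :
    ∃ ε₀ : ℝ, 0 < ε₀ ∧
      ∀ (Ω : Set (EuclideanSpace ℂ (Fin n))) (ρ : EuclideanSpace ℂ (Fin n) → ℝ),
        IsOpen Ω → Convex ℝ Ω → ContDiffOn ℝ 3 ρ Ω → partialsBoundedBy 3 ρ Ω M →
        (∀ ζ ∈ Ω, ∀ t : EuclideanSpace ℂ (Fin n), c * ‖t‖ ^ 2 ≤ (leviForm ρ ζ t).re) →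
        ∀ z ∈ Ω, ∀ ζ ∈ Ω, ‖z - ζ‖ < ε₀ →
          (ρ ζ - ρ z) / 2 + (c / 4) * ‖z - ζ‖ ^ 2 ≤ (leviPoly ρ z ζ).re := by
  set K : ℝ := (2 * n) ^ 3 * |M| with hK
  refine ⟨3 * c / (K + 1), by positivity, ?_⟩
  intro Ω ρ hΩ hconv hρ hB hLevi z hz ζ hζ hdist
  obtain ⟨w, hw, htaylor⟩ := hconv.exists_taylor_two_mean_remainder_lagrange hΩ hρ hζ hz
  have hρζ : ContDiffAt ℝ 3 ρ ζ := hρ.contDiffAt (hΩ.mem_nhds hζ)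
  rw [fderiv_apply_eq_two_mul_re_sum_wD (hρζ.differentiableAt (by norm_num)),
    fderiv_fderiv_apply_eq_two_mul_re_sum_add_leviForm (hρζ.of_le (by norm_num))] at htaylor
  have hremainder : |iteratedFDeriv ℝ 3 ρ w fun _ => z - ζ| ≤ K * ‖z - ζ‖ ^ 3 := by
    refine (abs_iteratedFDeriv_apply_const_le hB le_rfl hw (z - ζ)).trans ?_
    rw [mul_right_comm, hK]
    gcongr
    exact le_abs_self M
  have hcubic : K * ‖z - ζ‖ ^ 3 ≤ 3 * c * ‖z - ζ‖ ^ 2 := by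
    have hsmall : K * ‖z - ζ‖ ≤ 3 * c := by
      have := (lt_div_iff₀ (by positivity)).1 hdist
      nlinarith [norm_nonneg (z - ζ)]
    calc K * ‖z - ζ‖ ^ 3 = K * ‖z - ζ‖ * ‖z - ζ‖ ^ 2 := by ring
      _ ≤ 3 * c * ‖z - ζ‖ ^ 2 := by gcongr
  rw [re_leviPoly]
  linarith [hLevi ζ hζ (z - ζ), neg_abs_le (iteratedFDeriv ℝ 3 ρ w fun _ => z - ζ)]

/-- lower bound for `Re F(z,ζ)` near the diagonal under a uniform
positivity assumption on the Levi form. -/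
theorem re_leviPoly_lower_bound (n : ℕ) (hn : 1 ≤ n) (M c : ℝ) (hc : 0 < c) :
    ∃ ε₀ : ℝ, 0 < ε₀ ∧
      ∀ (Ω : Set (EuclideanSpace ℂ (Fin n))) (ρ : EuclideanSpace ℂ (Fin n) → ℝ),
        IsOpen Ω → Convex ℝ Ω → ContDiffOn ℝ 3 ρ Ω → partialsBoundedBy 3 ρ Ω M →
        (∀ ζ ∈ Ω, ∀ t : EuclideanSpace ℂ (Fin n), c * ‖t‖ ^ 2 ≤ (leviForm ρ ζ t).re) →
        ∀ z ∈ Ω, ∀ ζ ∈ Ω, ‖z - ζ‖ < ε₀ →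
          (ρ ζ - ρ z) / 2 + (c / 4) * ‖z - ζ‖ ^ 2 ≤ (leviPoly ρ z ζ).re :=
  re_leviPoly_lower_bound_general n M c hc
end
end

section
/- Let n ≥ 2 be an integer and 0 < β ≤ 1. There is a constant C, depending only on n and β, such that for every δ ∈ (0,1]: ∫₀¹ ∫₀¹ r · t^{2n−5+β} · (δ + r + t²)^{−(n+1)} dr dt ≤ C · δ^{β/2 − 1}. -/
/-!
Since `r ≤ δ + r + t²`, the `r`-integral is at most `(δ + t²)^(1-n) / (n - 1)`, so with
`p = 2n - 5 + β` and `q = n - 1` it remains to bound `∫₀^∞ t^p (δ + t²)^(-q) dt`.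
Split at `t = √δ`: below it `(δ + t²)^(-q) ≤ δ^(-q)`, above it `(δ + t²)^(-q) ≤ t^(-2q)`,
and each piece is of order `δ^((p+1)/2 - q) = δ^(β/2 - 1)`.
-/

open MeasureTheory Real Set

lemma integral_Ioc_zero_rpow {p s : ℝ} (hp : -1 < p) (hs : 0 ≤ s) :
    ∫ t in Ioc 0 s, t ^ p = s ^ (p + 1) / (p + 1) := by
  rw [← intervalIntegral.integral_of_le hs, integral_rpow (Or.inl hp), zero_rpow (by linarith),
    sub_zero]

lemma integrableOn_Ioc_zero_rpow {p s : ℝ} (hp : -1 < p) (hs : 0 ≤ s) :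
    IntegrableOn (fun t : ℝ ↦ t ^ p) (Ioc 0 s) :=
  (intervalIntegrable_iff_integrableOn_Ioc_of_le hs).1
    (intervalIntegral.intervalIntegrable_rpow' hp)

lemma integral_Ioo_zero_one_div_add_pow_le {n : ℕ} (hn : 1 < n) {a : ℝ} (ha : 0 < a) :
    ∫ r in Ioo 0 1, r / (r + a) ^ (n + 1) ≤ a ^ (1 - (n : ℝ)) / (n - 1) := by
  have hn' : (1 : ℝ) < n := by exact_mod_cast hn
  have hexp : -(n : ℝ) < -1 := by linarith
  have hpos : ∀ r ∈ Ioo (0 : ℝ) 1, 0 < r + a := fun r hr ↦ by linarith [hr.1]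
  have hle : ∀ r ∈ Ioo (0 : ℝ) 1, r / (r + a) ^ (n + 1) ≤ (r + a) ^ (-(n : ℝ)) := by
    intro r hr
    have hra := hpos r hr
    calc r / (r + a) ^ (n + 1) ≤ (r + a) / (r + a) ^ (n + 1) := by gcongr; linarith
      _ = (r + a) ^ (-(n : ℝ)) := by
        rw [rpow_neg hra.le, rpow_natCast, pow_succ]; field_simp
  have hint : IntegrableOn (fun r : ℝ ↦ (r + a) ^ (-(n : ℝ))) (Ioo 0 1) :=
    (ContinuousOn.integrableOn_Icc (ContinuousOn.rpow_const (by fun_prop)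
      fun r hr ↦ Or.inl (by linarith [hr.1]))).mono_set Ioo_subset_Icc_self
  calc ∫ r in Ioo 0 1, r / (r + a) ^ (n + 1)
      ≤ ∫ r in Ioo 0 1, (r + a) ^ (-(n : ℝ)) := by
        refine integral_mono_of_nonneg ?_ hint ?_
        · filter_upwards [ae_restrict_mem measurableSet_Ioo] with r hr
          exact div_nonneg hr.1.le (pow_nonneg (hpos r hr).le _)
        · filter_upwards [ae_restrict_mem measurableSet_Ioo] using hle
    _ = ∫ x in Ioc a (1 + a), x ^ (-(n : ℝ)) := by
        rw [← integral_Ioc_eq_integral_Ioo, ← intervalIntegral.integral_of_le zero_le_one,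
          intervalIntegral.integral_comp_add_right (· ^ (-(n : ℝ))), zero_add,
          intervalIntegral.integral_of_le (by linarith)]
    _ ≤ ∫ x in Ioi a, x ^ (-(n : ℝ)) :=
        setIntegral_mono_set (integrableOn_Ioi_rpow_of_lt hexp ha)
          ((ae_restrict_mem measurableSet_Ioi).mono fun x hx ↦ rpow_nonneg (ha.trans hx).le _)
          Ioc_subset_Ioi_self.eventuallyLE
    _ = a ^ (1 - (n : ℝ)) / (n - 1) := by
        rw [integral_Ioi_rpow_of_lt hexp ha, neg_div, ← div_neg, neg_add, neg_neg,
          ← sub_eq_add_neg, neg_add_eq_sub]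

lemma integral_Ioo_zero_one_mul_rpow_div_pow_le {n : ℕ} (hn : 1 < n) (p : ℝ) {δ t : ℝ}
    (hδ : 0 < δ) (ht : 0 ≤ t) :
    ∫ r in Ioo 0 1, r * t ^ p / (δ + r + t ^ 2) ^ (n + 1) ≤
      t ^ p * (δ + t ^ 2) ^ (-((n : ℝ) - 1)) / ((n : ℝ) - 1) := by
  have hsplit : ∀ r, r * t ^ p / (δ + r + t ^ 2) ^ (n + 1) =
      t ^ p * (r / (r + (δ + t ^ 2)) ^ (n + 1)) := fun r ↦ by ring_nf
  simp only [hsplit, integral_const_mul, mul_div_assoc, neg_sub]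
  exact mul_le_mul_of_nonneg_left
    (integral_Ioo_zero_one_div_add_pow_le hn (by positivity)) (rpow_nonneg ht p)

section

variable {p q δ : ℝ}

lemma rpow_mul_add_sq_rpow_neg_le_mul_rpow (hq : 0 ≤ q) (hδ : 0 < δ) {t : ℝ} (ht : 0 ≤ t) :
    t ^ p * (δ + t ^ 2) ^ (-q) ≤ δ ^ (-q) * t ^ p := by
  rw [mul_comm]
  exact mul_le_mul_of_nonneg_right
    (rpow_le_rpow_of_nonpos hδ (le_add_of_nonneg_right (sq_nonneg t)) (neg_nonpos.2 hq))
    (rpow_nonneg ht p)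

lemma rpow_mul_add_sq_rpow_neg_le_rpow_sub (hq : 0 ≤ q) (hδ : 0 ≤ δ) {t : ℝ} (ht : 0 < t) :
    t ^ p * (δ + t ^ 2) ^ (-q) ≤ t ^ (p - 2 * q) := by
  calc t ^ p * (δ + t ^ 2) ^ (-q) ≤ t ^ p * (t ^ 2) ^ (-q) := by
        refine mul_le_mul_of_nonneg_left ?_ (rpow_nonneg ht.le p)
        exact rpow_le_rpow_of_nonpos (pow_pos ht 2) (le_add_of_nonneg_left hδ) (neg_nonpos.2 hq)
    _ = t ^ (p - 2 * q) := by
        rw [← rpow_natCast, ← rpow_mul ht.le, ← rpow_add ht]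
        ring_nf

lemma rpow_mul_add_sq_rpow_neg_nonneg (hδ : 0 ≤ δ) {t : ℝ} (ht : 0 ≤ t) :
    0 ≤ t ^ p * (δ + t ^ 2) ^ (-q) := by positivity

lemma measurable_rpow_mul_add_sq_rpow_neg :
    Measurable fun t : ℝ ↦ t ^ p * (δ + t ^ 2) ^ (-q) := by
  fun_prop

lemma integrableOn_Ioc_zero_rpow_mul_add_sq_rpow_neg (hp : -1 < p) (hq : 0 ≤ q) (hδ : 0 < δ)
    {s : ℝ} (hs : 0 ≤ s) :
    IntegrableOn (fun t : ℝ ↦ t ^ p * (δ + t ^ 2) ^ (-q)) (Ioc 0 s) := by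
  refine ((integrableOn_Ioc_zero_rpow hp hs).const_mul (δ ^ (-q))).mono'
    measurable_rpow_mul_add_sq_rpow_neg.aestronglyMeasurable ?_
  filter_upwards [ae_restrict_mem measurableSet_Ioc] with t ht
  rw [norm_of_nonneg (rpow_mul_add_sq_rpow_neg_nonneg hδ.le ht.1.le)]
  exact rpow_mul_add_sq_rpow_neg_le_mul_rpow hq hδ ht.1.le

lemma integrableOn_Ioi_rpow_mul_add_sq_rpow_neg (hpq : p + 1 < 2 * q) (hq : 0 ≤ q)
    (hδ : 0 ≤ δ) {s : ℝ} (hs : 0 < s) :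
    IntegrableOn (fun t : ℝ ↦ t ^ p * (δ + t ^ 2) ^ (-q)) (Ioi s) := by
  refine (integrableOn_Ioi_rpow_of_lt (by linarith : p - 2 * q < -1) hs).mono'
    measurable_rpow_mul_add_sq_rpow_neg.aestronglyMeasurable ?_
  filter_upwards [ae_restrict_mem measurableSet_Ioi] with t ht
  rw [norm_of_nonneg (rpow_mul_add_sq_rpow_neg_nonneg hδ (hs.trans ht).le)]
  exact rpow_mul_add_sq_rpow_neg_le_rpow_sub hq hδ (hs.trans ht)

lemma setIntegral_Ioc_zero_rpow_mul_add_sq_rpow_neg_le (hp : -1 < p) (hq : 0 ≤ q) (hδ : 0 < δ)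
    {s : ℝ} (hs : 0 ≤ s) :
    ∫ t in Ioc 0 s, t ^ p * (δ + t ^ 2) ^ (-q) ≤ δ ^ (-q) * (s ^ (p + 1) / (p + 1)) := by
  rw [← integral_Ioc_zero_rpow hp hs, ← integral_const_mul]
  exact setIntegral_mono_on (integrableOn_Ioc_zero_rpow_mul_add_sq_rpow_neg hp hq hδ hs)
    ((integrableOn_Ioc_zero_rpow hp hs).const_mul _) measurableSet_Ioc
    fun t ht ↦ rpow_mul_add_sq_rpow_neg_le_mul_rpow hq hδ ht.1.le

lemma setIntegral_Ioi_rpow_mul_add_sq_rpow_neg_le (hpq : p + 1 < 2 * q) (hq : 0 ≤ q)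
    (hδ : 0 ≤ δ) {s : ℝ} (hs : 0 < s) :
    ∫ t in Ioi s, t ^ p * (δ + t ^ 2) ^ (-q) ≤ s ^ (p + 1 - 2 * q) / (2 * q - (p + 1)) := by
  have hexp : p - 2 * q < -1 := by linarith
  calc ∫ t in Ioi s, t ^ p * (δ + t ^ 2) ^ (-q) ≤ ∫ t in Ioi s, t ^ (p - 2 * q) :=
        setIntegral_mono_on (integrableOn_Ioi_rpow_mul_add_sq_rpow_neg hpq hq hδ hs)
          (integrableOn_Ioi_rpow_of_lt hexp hs) measurableSet_Ioi
          fun t ht ↦ rpow_mul_add_sq_rpow_neg_le_rpow_sub hq hδ (hs.trans ht)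
    _ = s ^ (p + 1 - 2 * q) / (2 * q - (p + 1)) := by
        rw [integral_Ioi_rpow_of_lt hexp hs, neg_div, ← div_neg]
        ring_nf

lemma integrableOn_Ioi_zero_rpow_mul_add_sq_rpow_neg (hp : -1 < p) (hpq : p + 1 < 2 * q)
    (hδ : 0 < δ) : IntegrableOn (fun t : ℝ ↦ t ^ p * (δ + t ^ 2) ^ (-q)) (Ioi 0) := by
  have hq : 0 ≤ q := by linarith
  rw [← Ioc_union_Ioi_eq_Ioi zero_le_one]
  exact (integrableOn_Ioc_zero_rpow_mul_add_sq_rpow_neg hp hq hδ zero_le_one).union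
    (integrableOn_Ioi_rpow_mul_add_sq_rpow_neg hpq hq hδ.le one_pos)

lemma integral_Ioi_zero_rpow_mul_add_sq_rpow_neg_le (hp : -1 < p) (hpq : p + 1 < 2 * q)
    (hδ : 0 < δ) :
    ∫ t in Ioi 0, t ^ p * (δ + t ^ 2) ^ (-q) ≤
      (1 / (p + 1) + 1 / (2 * q - (p + 1))) * δ ^ ((p + 1) / 2 - q) := by
  have hq : 0 ≤ q := by linarith
  set s := δ ^ (1 / 2 : ℝ)
  have hs : 0 < s := rpow_pos_of_pos hδ _
  have hnear : δ ^ (-q) * s ^ (p + 1) = δ ^ ((p + 1) / 2 - q) := by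
    rw [← rpow_mul hδ.le, ← rpow_add hδ]; ring_nf
  have hfar : s ^ (p + 1 - 2 * q) = δ ^ ((p + 1) / 2 - q) := by
    rw [← rpow_mul hδ.le]; ring_nf
  rw [← Ioc_union_Ioi_eq_Ioi hs.le, setIntegral_union Ioc_disjoint_Ioi_same measurableSet_Ioi
    (integrableOn_Ioc_zero_rpow_mul_add_sq_rpow_neg hp hq hδ hs.le)
    (integrableOn_Ioi_rpow_mul_add_sq_rpow_neg hpq hq hδ.le hs)]
  calc _ ≤ δ ^ (-q) * (s ^ (p + 1) / (p + 1)) + s ^ (p + 1 - 2 * q) / (2 * q - (p + 1)) :=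
        add_le_add (setIntegral_Ioc_zero_rpow_mul_add_sq_rpow_neg_le hp hq hδ hs.le)
          (setIntegral_Ioi_rpow_mul_add_sq_rpow_neg_le hpq hq hδ.le hs)
    _ = _ := by rw [mul_div_assoc', hnear, hfar]; ring

end

/-- the model integral `∫₀¹∫₀¹ r t^{2n−5+β} (δ+r+t²)^{-(n+1)} dr dt`
is bounded by `C · δ^{β/2 − 1}`, uniformly for `δ ∈ (0,1]`. -/
theorem model_integral_distance_weight (n : ℕ) (hn : 2 ≤ n)
    (β : ℝ) (hβ0 : 0 < β) (hβ1 : β ≤ 1) :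
    ∃ C : ℝ, 0 < C ∧ ∀ δ : ℝ, 0 < δ → δ ≤ 1 →
      (∫ t in Set.Ioo (0 : ℝ) 1, ∫ r in Set.Ioo (0 : ℝ) 1,
          r * t ^ (2 * (n : ℝ) - 5 + β) / (δ + r + t ^ 2) ^ (n + 1))
        ≤ C * δ ^ (β / 2 - 1) := by
  have hn' : (2 : ℝ) ≤ n := by exact_mod_cast hn
  set p := 2 * (n : ℝ) - 5 + β
  set q := (n : ℝ) - 1
  have hp : -1 < p := by linarith
  have hpq : p + 1 < 2 * q := by linarith
  have hq : 0 < q := by linarith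
  refine ⟨(1 / (p + 1) + 1 / (2 * q - (p + 1))) / q,
    div_pos (add_pos (one_div_pos.2 (by linarith)) (one_div_pos.2 (by linarith))) hq,
    fun δ hδ _ ↦ ?_⟩
  have hweight := integrableOn_Ioi_zero_rpow_mul_add_sq_rpow_neg hp hpq hδ
  calc _ ≤ ∫ t in Ioo 0 1, t ^ p * (δ + t ^ 2) ^ (-q) / q := by
        refine integral_mono_of_nonneg ?_ ((hweight.mono_set Ioo_subset_Ioi_self).div_const _) ?_
        all_goals filter_upwards [ae_restrict_mem measurableSet_Ioo] with t ht
        · exact setIntegral_nonneg measurableSet_Ioo fun r hr ↦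
            div_nonneg (mul_nonneg hr.1.le (rpow_nonneg ht.1.le p))
              (pow_nonneg (by linarith [hr.1, sq_nonneg t]) _)
        · exact integral_Ioo_zero_one_mul_rpow_div_pow_le (by omega) p hδ ht.1.le
    _ ≤ (∫ t in Ioi 0, t ^ p * (δ + t ^ 2) ^ (-q)) / q := by
        rw [integral_div]
        refine div_le_div_of_nonneg_right (setIntegral_mono_set hweight ?_
          Ioo_subset_Ioi_self.eventuallyLE) hq.le
        filter_upwards [ae_restrict_mem measurableSet_Ioi] with t ht
        exact rpow_mul_add_sq_rpow_neg_nonneg hδ.le ht.le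
    _ ≤ _ := by
        rw [div_mul_eq_mul_div, ← (by ring : (p + 1) / 2 - q = β / 2 - 1)]
        exact div_le_div_of_nonneg_right
          (integral_Ioi_zero_rpow_mul_add_sq_rpow_neg_le hp hpq hδ) hq.le
end

section
/- Let n ≥ 2 be an integer and 0 < β ≤ 1. There is a constant C, depending only on n and β, such that for every τ ∈ (0,1]: ∫₀¹ ∫₀^τ ∫₀^τ t^{2n−5+β} · (s₁ + s₂ + t²)^{−n} dt ds₂ ds₁ ≤ C · τ^{β/2}. -/
/-!
Since `s₁, s₂, t² ≤ s₁ + s₂ + t²`, splitting the exponent `n = (1 - ε) + (1 - ε) + (n - 2 + 2ε)`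
bounds the integrand by the separated function `s₁^(ε-1) s₂^(ε-1) t^(β-4ε-1)`. With `ε = β/8`
all three exponents exceed `-1`, and the three one-dimensional integrals are
`8/β`, `(8/β) τ^(β/8)` and `(2/β) τ^(β/2)`; finally `τ^(β/8) ≤ 1`.
-/

open MeasureTheory Set

lemma rpow_mul_rpow_mul_rpow_le_rpow_add {x y z a b c : ℝ} (hx : 0 ≤ x) (hy : 0 ≤ y)
    (hz : 0 ≤ z) (ha : 0 ≤ a) (hb : 0 ≤ b) (hc : 0 ≤ c) :
    x ^ a * y ^ b * z ^ c ≤ (x + y + z) ^ (a + b + c) := by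
  have hxyz : 0 ≤ x + y + z := by positivity
  rw [Real.rpow_add_of_nonneg hxyz (by positivity) hc,
    Real.rpow_add_of_nonneg hxyz ha hb]
  gcongr <;> linarith

lemma rpow_div_add_add_sq_pow_le_mul_rpow {n : ℕ} (hn : 2 ≤ n) {β ε : ℝ} (hε0 : 0 ≤ ε) (hε1 : ε ≤ 1)
    {s₁ s₂ t : ℝ} (h₁ : 0 < s₁) (h₂ : 0 < s₂) (ht : 0 < t) :
    t ^ (2 * (n : ℝ) - 5 + β) / (s₁ + s₂ + t ^ 2) ^ n ≤
      s₁ ^ (ε - 1) * s₂ ^ (ε - 1) * t ^ (β - 4 * ε - 1) := by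
  have hn' : (2 : ℝ) ≤ n := by exact_mod_cast hn
  have hsplit : s₁ ^ (1 - ε) * s₂ ^ (1 - ε) * (t ^ 2) ^ ((n : ℝ) - 2 + 2 * ε) ≤
      (s₁ + s₂ + t ^ 2) ^ n := by
    have := rpow_mul_rpow_mul_rpow_le_rpow_add h₁.le h₂.le (sq_nonneg t)
      (sub_nonneg.2 hε1) (sub_nonneg.2 hε1) (by linarith : 0 ≤ (n : ℝ) - 2 + 2 * ε)
    rwa [show 1 - ε + (1 - ε) + ((n : ℝ) - 2 + 2 * ε) = n by ring, Real.rpow_natCast] at this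
  have hcancel : s₁ ^ (ε - 1) * s₂ ^ (ε - 1) * t ^ (β - 4 * ε - 1) *
      (s₁ ^ (1 - ε) * s₂ ^ (1 - ε) * (t ^ 2) ^ ((n : ℝ) - 2 + 2 * ε)) =
        t ^ (2 * (n : ℝ) - 5 + β) := by
    rw [← Real.rpow_natCast t 2, ← Real.rpow_mul ht.le]
    calc _ = s₁ ^ (ε - 1 + (1 - ε)) * s₂ ^ (ε - 1 + (1 - ε)) *
          t ^ (β - 4 * ε - 1 + (2 : ℕ) * ((n : ℝ) - 2 + 2 * ε)) := by
          rw [Real.rpow_add h₁, Real.rpow_add h₂, Real.rpow_add ht]; ring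
      _ = _ := by push_cast; ring_nf; simp
  rw [div_le_iff₀ (by positivity), ← hcancel]
  gcongr

lemma integral_Ioo_zero_rpow {r : ℝ} (hr : -1 < r) {τ : ℝ} (hτ : 0 < τ) :
    ∫ t in Ioo (0 : ℝ) τ, t ^ r = τ ^ (r + 1) / (r + 1) := by
  rw [← integral_Ioc_eq_integral_Ioo, ← intervalIntegral.integral_of_le hτ.le,
    integral_rpow (Or.inl hr), Real.zero_rpow (by linarith), sub_zero]

lemma setIntegral_le_mul_setIntegral {α : Type*} [MeasurableSpace α] {μ : Measure α}
    {s : Set α} (hs : MeasurableSet s) {f g : α → ℝ} {c : ℝ} (hf : ∀ x ∈ s, 0 ≤ f x)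
    (hg : IntegrableOn g s μ) (hfg : ∀ x ∈ s, f x ≤ c * g x) :
    ∫ x in s, f x ∂μ ≤ c * ∫ x in s, g x ∂μ := by
  rw [← integral_const_mul]
  exact integral_mono_of_nonneg ((ae_restrict_iff' hs).2 (ae_of_all _ hf)) (hg.const_mul c)
    ((ae_restrict_iff' hs).2 (ae_of_all _ hfg))

lemma iteratedSetIntegral_le_mul_mul {α β γ : Type*} [MeasurableSpace α] [MeasurableSpace β]
    [MeasurableSpace γ] {μ : Measure α} {ν : Measure β} {ρ : Measure γ} {A : Set α} {B : Set β}
    {C : Set γ} (hA : MeasurableSet A) (hB : MeasurableSet B) (hC : MeasurableSet C)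
    {f : α → β → γ → ℝ} {g : α → ℝ} {h : β → ℝ} {k : γ → ℝ}
    (hf : ∀ x ∈ A, ∀ y ∈ B, ∀ z ∈ C, 0 ≤ f x y z)
    (hfgh : ∀ x ∈ A, ∀ y ∈ B, ∀ z ∈ C, f x y z ≤ g x * h y * k z)
    (hg : IntegrableOn g A μ) (hh : IntegrableOn h B ν) (hk : IntegrableOn k C ρ) :
    ∫ x in A, ∫ y in B, ∫ z in C, f x y z ∂ρ ∂ν ∂μ ≤
      (∫ x in A, g x ∂μ) * (∫ y in B, h y ∂ν) * ∫ z in C, k z ∂ρ := by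
  set K := ∫ z in C, k z ∂ρ
  set H := ∫ y in B, h y ∂ν
  have inner : ∀ x ∈ A, ∀ y ∈ B, ∫ z in C, f x y z ∂ρ ≤ g x * K * h y := fun x hx y hy =>
    calc _ ≤ g x * h y * K := setIntegral_le_mul_setIntegral hC (hf x hx y hy) hk (hfgh x hx y hy)
      _ = g x * K * h y := by ring
  have middle : ∀ x ∈ A, ∫ y in B, ∫ z in C, f x y z ∂ρ ∂ν ≤ H * K * g x := fun x hx =>
    calc _ ≤ g x * K * H := setIntegral_le_mul_setIntegral hB
          (fun y hy => setIntegral_nonneg hC (hf x hx y hy)) hh (inner x hx)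
      _ = H * K * g x := by ring
  calc _ ≤ H * K * ∫ x in A, g x ∂μ := setIntegral_le_mul_setIntegral hA
        (fun x hx => setIntegral_nonneg hB fun y hy => setIntegral_nonneg hC (hf x hx y hy))
        hg middle
    _ = _ := by ring

/-- the model integral
`∫₀¹∫₀^τ∫₀^τ t^{2n−5+β} (s₁+s₂+t²)^{-n} dt ds₂ ds₁` is bounded by `C · τ^{β/2}`,
uniformly for `τ ∈ (0,1]`. -/
theorem model_integral_small_ball (n : ℕ) (hn : 2 ≤ n)
    (β : ℝ) (hβ0 : 0 < β) (hβ1 : β ≤ 1) :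
    ∃ C : ℝ, 0 < C ∧ ∀ τ : ℝ, 0 < τ → τ ≤ 1 →
      (∫ s1 in Set.Ioo (0 : ℝ) 1, ∫ s2 in Set.Ioo (0 : ℝ) τ, ∫ t in Set.Ioo (0 : ℝ) τ,
          t ^ (2 * (n : ℝ) - 5 + β) / (s1 + s2 + t ^ 2) ^ n)
        ≤ C * τ ^ (β / 2) := by
  refine ⟨8 / β * (8 / β) * (2 / β), by positivity, fun τ hτ hτ1 => ?_⟩
  have hs : -1 < β / 8 - 1 := by linarith
  have ht : -1 < β / 2 - 1 := by linarith
  have hbound :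
      (∫ s1 in Ioo (0 : ℝ) 1, ∫ s2 in Ioo (0 : ℝ) τ, ∫ t in Ioo (0 : ℝ) τ,
          t ^ (2 * (n : ℝ) - 5 + β) / (s1 + s2 + t ^ 2) ^ n) ≤
        (∫ s1 in Ioo (0 : ℝ) 1, s1 ^ (β / 8 - 1)) * (∫ s2 in Ioo (0 : ℝ) τ, s2 ^ (β / 8 - 1)) *
          ∫ t in Ioo (0 : ℝ) τ, t ^ (β / 2 - 1) :=
    iteratedSetIntegral_le_mul_mul measurableSet_Ioo measurableSet_Ioo measurableSet_Ioo
      (fun s1 h1 s2 h2 t ht => by have := h1.1; have := h2.1; have := ht.1; positivity)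
      (fun s1 h1 s2 h2 t ht => (rpow_div_add_add_sq_pow_le_mul_rpow hn (ε := β / 8) (by positivity)
        (by linarith) h1.1 h2.1 ht.1).trans_eq (by ring_nf))
      ((intervalIntegral.integrableOn_Ioo_rpow_iff one_pos).2 hs) ((intervalIntegral.integrableOn_Ioo_rpow_iff hτ).2 hs)
      ((intervalIntegral.integrableOn_Ioo_rpow_iff hτ).2 ht)
  rw [integral_Ioo_zero_rpow hs one_pos, integral_Ioo_zero_rpow hs hτ,
    integral_Ioo_zero_rpow ht hτ, Real.one_rpow] at hbound
  refine hbound.trans ?_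
  have hτ8 : τ ^ (β / 8) ≤ 1 := Real.rpow_le_one hτ.le hτ1 (by positivity)
  calc _ = 8 / β * (8 / β) * (2 / β) * τ ^ (β / 2) * τ ^ (β / 8) := by ring_nf
    _ ≤ 8 / β * (8 / β) * (2 / β) * τ ^ (β / 2) * 1 := by gcongr
    _ = _ := mul_one _
end

section
/- Let n ≥ 2 be an integer. There is a constant C, depending only on n, such that for every δ ∈ (0,1]: ∫₀¹ ∫₀¹ r · t^{2n−3} · (δ + r + t²)^{−(n+1)} dr dt ≤ C · (1 + |log δ|). -/
/-!
With `D = δ + r + t²` we have `r ≤ D` and `t² ≤ D`, so the integrand is at most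
`t · D^{n-1} / D^{n+1} = t / D²`. Integrating in `r` gives at most `t / (δ + t²)`, and
`∫₀¹ t / (δ + t²) dt = ½ log((δ + 1) / δ)`, which is `O(1 + |log δ|)`.
-/

open MeasureTheory Real Set

lemma setIntegral_Ioo_eq_intervalIntegral {a b : ℝ} (hab : a ≤ b) (f : ℝ → ℝ) :
    ∫ x in Ioo a b, f x = ∫ x in a..b, f x := by
  rw [intervalIntegral.integral_of_le hab, integral_Ioc_eq_integral_Ioo]

lemma integral_one_div_add_sq {a : ℝ} (ha : 0 < a) :
    ∫ r in Ioo (0 : ℝ) 1, 1 / (a + r) ^ 2 = a⁻¹ - (a + 1)⁻¹ := by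
  have hpos : ∀ r ∈ uIcc (0 : ℝ) 1, a + r ≠ 0 := fun r hr => by
    rw [uIcc_of_le zero_le_one] at hr; linarith [hr.1]
  rw [setIntegral_Ioo_eq_intervalIntegral zero_le_one,
    intervalIntegral.integral_eq_sub_of_hasDerivAt (f := fun r => -(a + r)⁻¹)]
  · simp only [add_zero]; ring
  · intro r hr
    convert (((hasDerivAt_id r).const_add a).inv (hpos r hr)).neg using 1
    · rfl
    · simp [neg_div]
  · exact (continuousOn_const.div ((continuousOn_const.add continuousOn_id).pow 2)
      fun r hr => pow_ne_zero 2 (hpos r hr)).intervalIntegrable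

lemma integral_div_add_sq {δ : ℝ} (hδ : 0 < δ) :
    ∫ t in Ioo (0 : ℝ) 1, t / (δ + t ^ 2) = (log (δ + 1) - log δ) / 2 := by
  have hpos : ∀ t : ℝ, δ + t ^ 2 ≠ 0 := fun t => by positivity
  rw [setIntegral_Ioo_eq_intervalIntegral zero_le_one,
    intervalIntegral.integral_eq_sub_of_hasDerivAt (f := fun t => log (δ + t ^ 2) / 2)]
  · norm_num; ring
  · intro t _
    refine ((((hasDerivAt_pow 2 t).const_add δ).log (hpos t)).div_const 2).congr_deriv ?_
    field_simp
    norm_num [mul_comm]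
  · exact (continuous_id.div (continuous_const.add (continuous_pow 2))
      hpos).intervalIntegrable _ _

lemma mul_pow_div_pow_le {n : ℕ} (hn : 2 ≤ n) {r t D : ℝ} (ht : 0 ≤ t)
    (hD : 0 < D) (hrD : r ≤ D) (htD : t ^ 2 ≤ D) :
    r * t ^ (2 * n - 3) / D ^ (n + 1) ≤ t / D ^ 2 := by
  obtain ⟨m, rfl⟩ := Nat.exists_eq_add_of_le' hn
  have hnum : r * (t ^ 2) ^ m ≤ D ^ (m + 1) := by
    rw [pow_succ' D m]; gcongr
  calc r * t ^ (2 * (m + 2) - 3) / D ^ (m + 2 + 1)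
      = r * (t ^ 2) ^ m * t / (D ^ (m + 1) * D ^ 2) := by
        rw [show 2 * (m + 2) - 3 = 2 * m + 1 by omega, pow_succ, pow_mul]; ring
    _ ≤ D ^ (m + 1) * t / (D ^ (m + 1) * D ^ 2) := by gcongr
    _ = t / D ^ 2 := by field_simp

lemma log_add_one_sub_log_le {δ : ℝ} (hδ : 0 < δ) (hδ1 : δ ≤ 1) :
    (log (δ + 1) - log δ) / 2 ≤ 1 + |log δ| := by
  have := log_le_sub_one_of_pos (by linarith : 0 < δ + 1)
  rw [abs_of_nonpos (log_nonpos hδ.le hδ1)]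
  linarith [log_nonpos hδ.le hδ1]

lemma integral_model_inner_le {n : ℕ} (hn : 2 ≤ n) {δ t : ℝ} (hδ : 0 < δ) (ht : 0 < t) :
    ∫ r in Ioo (0 : ℝ) 1, r * t ^ (2 * n - 3) / (δ + r + t ^ 2) ^ (n + 1) ≤
      t / (δ + t ^ 2) := by
  have ha : 0 < δ + t ^ 2 := by positivity
  have hmajorant : IntegrableOn (fun r => t * (1 / (δ + t ^ 2 + r) ^ 2)) (Ioo 0 1) :=
    ((continuousOn_const.mul (continuousOn_const.div
      ((continuousOn_const.add continuousOn_id).pow 2) fun r hr =>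
        (by have := hr.1; positivity : (δ + t ^ 2 + r) ^ 2 ≠ 0))).integrableOn_Icc).mono_set
      Ioo_subset_Icc_self
  calc ∫ r in Ioo (0 : ℝ) 1, r * t ^ (2 * n - 3) / (δ + r + t ^ 2) ^ (n + 1)
      ≤ ∫ r in Ioo (0 : ℝ) 1, t * (1 / (δ + t ^ 2 + r) ^ 2) := by
        refine integral_mono_of_nonneg ?_ hmajorant ?_ <;>
          filter_upwards [ae_restrict_mem measurableSet_Ioo] with r hr
        · have := hr.1; positivity
        · have := hr.1
          rw [mul_one_div, show δ + t ^ 2 + r = δ + r + t ^ 2 by ring]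
          exact mul_pow_div_pow_le hn ht.le (by positivity) (by linarith) (by linarith)
    _ = t * ((δ + t ^ 2)⁻¹ - (δ + t ^ 2 + 1)⁻¹) := by
        rw [integral_const_mul, integral_one_div_add_sq ha]
    _ ≤ t / (δ + t ^ 2) := by
        rw [div_eq_mul_inv]
        gcongr
        linarith [inv_pos.2 (by linarith : 0 < δ + t ^ 2 + 1)]

/-- the model integral `∫₀¹∫₀¹ r t^{2n−3} (δ+r+t²)^{-(n+1)} dr dt`
is bounded by `C · (1 + |log δ|)`, uniformly for `δ ∈ (0,1]`. -/
theorem model_integral_log_volume (n : ℕ) (hn : 2 ≤ n) :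
    ∃ C : ℝ, 0 < C ∧ ∀ δ : ℝ, 0 < δ → δ ≤ 1 →
      (∫ t in Set.Ioo (0 : ℝ) 1, ∫ r in Set.Ioo (0 : ℝ) 1,
          r * t ^ (2 * n - 3) / (δ + r + t ^ 2) ^ (n + 1))
        ≤ C * (1 + |Real.log δ|) := by
  refine ⟨1, one_pos, fun δ hδ hδ1 => ?_⟩
  have hmajorant : IntegrableOn (fun t => t / (δ + t ^ 2)) (Ioo 0 1) :=
    ((continuous_id.div (continuous_const.add (continuous_pow 2)) fun t =>
      (by positivity : δ + t ^ 2 ≠ 0)).integrableOn_Icc).mono_set Ioo_subset_Icc_self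
  calc (∫ t in Ioo (0 : ℝ) 1, ∫ r in Ioo (0 : ℝ) 1,
          r * t ^ (2 * n - 3) / (δ + r + t ^ 2) ^ (n + 1))
      ≤ ∫ t in Ioo (0 : ℝ) 1, t / (δ + t ^ 2) := by
        refine integral_mono_of_nonneg ?_ hmajorant ?_ <;>
          filter_upwards [ae_restrict_mem measurableSet_Ioo] with t ht
        · have := ht.1
          exact setIntegral_nonneg measurableSet_Ioo fun r hr => by have := hr.1; positivity
        · exact integral_model_inner_le hn hδ ht.1
    _ = (log (δ + 1) - log δ) / 2 := integral_div_add_sq hδ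
    _ ≤ 1 * (1 + |log δ|) := by rw [one_mul]; exact log_add_one_sub_log_le hδ hδ1
end
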